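/- arXiv:2405.02585 — 7 statements merged into one kernel-verified Lean document; each statement's English description precedes it below -/
import Mathlib

section
/- Let P_{XY} be a joint probability mass function on a finite set 𝒳 × 𝒴, let y ∈ 𝒴 satisfy P_Y(y) > 0, and assume P_{X|Y}(x|y) > 0 for every x ∈ 𝒳 with P_X(x) > 0. Then the supremum, over all finite sets 𝒰 and all channels P_{U|X}, of the ratio γ(P_U) / γ(P_{U|Y}(·|y)) equals max_{x : P_X(x) > 0} P_X(x) / P_{X|Y}(x|y). Equivalently, the pointwise maximal guesswork leakage from X to y equals the Rényi divergence of order infinity D_∞(P_X ‖ P_{X|Y=y}). -/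
open Finset

/-- The guesswork of a (sub)probability mass function `P` on a finite set `U`:
the minimum over all guessing functions (bijections `G : U → {1,…,n}`)
of `∑ u, G(u) · P(u)`. -/
noncomputable def guesswork {U : Type*} [Fintype U] (P : U → ℝ) : ℝ :=
  ⨅ G : U ≃ Fin (Fintype.card U), ∑ u, ((G u).val + 1 : ℝ) * P u

section GWL
variable {U : Type*} [Fintype U]

instance : Nonempty (U ≃ Fin (Fintype.card U)) := ⟨Fintype.equivFin U⟩

lemma sum_fin_add_one (n : ℕ) : ∑ i : Fin n, ((i : ℝ) + 1) = n * (n + 1) / 2 := by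
  rw [Fin.sum_univ_eq_sum_range (fun k => ((k:ℝ)+1)) n]
  induction n with
  | zero => simp
  | succ m ih => rw [Finset.sum_range_succ, ih]; push_cast; ring

lemma guesswork_le_sum (P : U → ℝ) (hP : ∀ u, 0 ≤ P u) (G : U ≃ Fin (Fintype.card U)) :
    guesswork P ≤ ∑ u, ((G u).val + 1 : ℝ) * P u := by
  refine ciInf_le ⟨0, ?_⟩ G
  rintro _ ⟨H, rfl⟩
  exact Finset.sum_nonneg fun u _ => mul_nonneg (by positivity) (hP u)

lemma le_guesswork_of (P : U → ℝ) (c : ℝ)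
    (h : ∀ G : U ≃ Fin (Fintype.card U), c ≤ ∑ u, ((G u).val + 1 : ℝ) * P u) :
    c ≤ guesswork P := le_ciInf h

lemma guesswork_nonneg (P : U → ℝ) (hP : ∀ u, 0 ≤ P u) : 0 ≤ guesswork P :=
  le_guesswork_of _ _ fun _ => Finset.sum_nonneg fun u _ => mul_nonneg (by positivity) (hP u)

lemma one_le_guesswork (P : U → ℝ) (hP : ∀ u, 0 ≤ P u) (hs : ∑ u, P u = 1) :
    1 ≤ guesswork P := by
  refine le_guesswork_of _ _ fun G => ?_
  calc (1:ℝ) = ∑ u, P u := hs.symm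
  _ ≤ ∑ u, ((G u).val + 1 : ℝ) * P u :=
      Finset.sum_le_sum fun u _ => le_mul_of_one_le_left (hP u)
        (by have := Nat.cast_nonneg (α := ℝ) (G u).val; linarith)

lemma guesswork_ge_const (P : U → ℝ) (c : ℝ) (hc : 0 ≤ c) (h : ∀ u, c ≤ P u) :
    c * ((Fintype.card U : ℝ) * ((Fintype.card U : ℝ) + 1) / 2) ≤ guesswork P := by
  refine le_guesswork_of _ _ fun G => ?_
  have h1 : ∑ u, (((G u).val : ℝ) + 1) = (Fintype.card U : ℝ) * ((Fintype.card U : ℝ) + 1) / 2 := by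
    rw [Equiv.sum_comp G (fun i : Fin (Fintype.card U) => ((i : ℝ) + 1))]
    exact sum_fin_add_one _
  calc c * ((Fintype.card U : ℝ) * ((Fintype.card U : ℝ) + 1) / 2)
      = ∑ u, (((G u).val : ℝ) + 1) * c := by rw [← Finset.sum_mul, h1]; ring
  _ ≤ ∑ u, ((G u).val + 1 : ℝ) * P u :=
      Finset.sum_le_sum fun u _ => mul_le_mul_of_nonneg_left (h u)
        (by have := Nat.cast_nonneg (α := ℝ) (G u).val; linarith)

lemma guesswork_le_mul (P Q : U → ℝ) (c : ℝ) (hc : 0 < c) (hP : ∀ u, 0 ≤ P u)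
    (h : ∀ u, P u ≤ c * Q u) : guesswork P ≤ c * guesswork Q := by
  rw [← div_le_iff₀' hc]
  refine le_ciInf fun G => ?_
  rw [div_le_iff₀' hc]
  calc guesswork P ≤ ∑ u, ((G u).val + 1 : ℝ) * P u := guesswork_le_sum P hP G
  _ ≤ ∑ u, ((G u).val + 1 : ℝ) * (c * Q u) :=
      Finset.sum_le_sum fun u _ => mul_le_mul_of_nonneg_left (h u)
        (by have := Nat.cast_nonneg (α := ℝ) (G u).val; linarith)
  _ = c * ∑ u, ((G u).val + 1 : ℝ) * Q u := by rw [Finset.mul_sum]; congr 1; ext u; ring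

end GWL

/-- **Pointwise maximal guesswork leakage.**
Let `P_{XY}` be a joint pmf on a finite set `𝒳 × 𝒴`, let `y` satisfy `P_Y(y) > 0`,
and assume `P_{X|Y}(x|y) > 0` whenever `P_X(x) > 0`.  Then the supremum, over all
finite sets `𝒰` (wlog `Fin n`) and channels `P_{U|X}`, of
`γ(P_U) / γ(P_{U|Y}(·|y))` equals `max_{x : P_X(x)>0} P_X(x)/P_{X|Y}(x|y)`,
i.e. the pointwise maximal guesswork leakage equals `exp (D_∞(P_X ‖ P_{X|Y=y}))`. -/
theorem pointwise_maximal_guesswork_leakage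
    {X Y : Type*} [Fintype X] [Fintype Y]
    (PXY : X → Y → ℝ)
    (hnn : ∀ x y, 0 ≤ PXY x y)
    (hsum : ∑ x, ∑ y, PXY x y = 1)
    (y : Y)
    (hy : 0 < ∑ x, PXY x y)
    (habs : ∀ x, 0 < ∑ y', PXY x y' → 0 < PXY x y / ∑ x', PXY x' y) :
    sSup {r : ℝ | ∃ (n : ℕ) (K : X → Fin n → ℝ),
        (∀ x u, 0 ≤ K x u) ∧ (∀ x, ∑ u, K x u = 1) ∧
        r = guesswork (fun u => ∑ x, K x u * (∑ y', PXY x y')) /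
            guesswork (fun u => ∑ x, K x u * (PXY x y / ∑ x', PXY x' y))} =
      ⨆ x : {x : X // 0 < ∑ y', PXY x y'},
        (∑ y', PXY x.1 y') / (PXY x.1 y / ∑ x', PXY x' y) := by
  classical
  set f : {x : X // 0 < ∑ y', PXY x y'} → ℝ :=
    fun x => (∑ y', PXY x.1 y') / (PXY x.1 y / ∑ x', PXY x' y) with hf
  set M : ℝ := ⨆ x, f x with hMdef
  set S : Set ℝ := {r : ℝ | ∃ (n : ℕ) (K : X → Fin n → ℝ),
        (∀ x u, 0 ≤ K x u) ∧ (∀ x, ∑ u, K x u = 1) ∧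
        r = guesswork (fun u => ∑ x, K x u * (∑ y', PXY x y')) /
            guesswork (fun u => ∑ x, K x u * (PXY x y / ∑ x', PXY x' y))} with hS
  -- basic facts
  have hPXnn : ∀ x : X, 0 ≤ ∑ y', PXY x y' := fun x => Finset.sum_nonneg fun _ _ => hnn _ _
  have hcnn : ∀ x : X, 0 ≤ PXY x y / ∑ x', PXY x' y := fun x => div_nonneg (hnn x y) hy.le
  have hcsum : ∑ x, (PXY x y / ∑ x', PXY x' y) = 1 := by
    rw [← Finset.sum_div]; exact div_self hy.ne'
  have hTne : Nonempty {x : X // 0 < ∑ y', PXY x y'} := by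
    by_contra h
    rw [not_nonempty_iff] at h
    have h0 : ∀ x ∈ (univ : Finset X), ∑ y', PXY x y' = 0 := fun x _ =>
      le_antisymm (by by_contra hc; exact h.false ⟨x, lt_of_not_ge hc⟩) (hPXnn x)
    rw [Finset.sum_eq_zero h0] at hsum
    norm_num at hsum
  have hfpos : ∀ t, 0 < f t := fun t => div_pos t.2 (habs t.1 t.2)
  have hbddf : BddAbove (Set.range f) := Set.Finite.bddAbove (Set.finite_range f)
  have hM0 : 0 < M := lt_of_lt_of_le (hfpos hTne.some) (le_ciSup hbddf _)
  have hle : ∀ x : X, (∑ y', PXY x y') ≤ M * (PXY x y / ∑ x', PXY x' y) := by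
    intro x
    by_cases hx : 0 < ∑ y', PXY x y'
    · have h1 : f ⟨x, hx⟩ ≤ M := le_ciSup hbddf _
      exact (div_le_iff₀ (habs x hx)).mp h1
    · have : (∑ y', PXY x y') ≤ 0 := le_of_not_gt hx
      exact le_trans this (mul_nonneg hM0.le (hcnn x))
  -- the upper bound
  have hub : ∀ r ∈ S, r ≤ M := by
    rintro r ⟨n, K, hK0, hK1, rfl⟩
    set QU : Fin n → ℝ := fun u => ∑ x, K x u * (PXY x y / ∑ x', PXY x' y) with hQU
    set PU : Fin n → ℝ := fun u => ∑ x, K x u * (∑ y', PXY x y') with hPU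
    have hQUnn : ∀ u, 0 ≤ QU u := fun u =>
      Finset.sum_nonneg fun x _ => mul_nonneg (hK0 x u) (hcnn x)
    have hPUnn : ∀ u, 0 ≤ PU u := fun u =>
      Finset.sum_nonneg fun x _ => mul_nonneg (hK0 x u) (hPXnn x)
    have hQ1 : ∑ u, QU u = 1 := by
      rw [hQU]
      rw [Finset.sum_comm]
      calc ∑ x, ∑ u, K x u * (PXY x y / ∑ x', PXY x' y)
          = ∑ x, (∑ u, K x u) * (PXY x y / ∑ x', PXY x' y) := by
            congr 1; ext x; rw [Finset.sum_mul]
        _ = ∑ x, (PXY x y / ∑ x', PXY x' y) := by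
            congr 1; ext x; rw [hK1 x, one_mul]
        _ = 1 := hcsum
    have hQg : (1:ℝ) ≤ guesswork QU := one_le_guesswork QU hQUnn hQ1
    have hPle : ∀ u, PU u ≤ M * QU u := by
      intro u
      rw [hPU, hQU, Finset.mul_sum]
      refine Finset.sum_le_sum fun x _ => ?_
      calc K x u * (∑ y', PXY x y') ≤ K x u * (M * (PXY x y / ∑ x', PXY x' y)) :=
            mul_le_mul_of_nonneg_left (hle x) (hK0 x u)
        _ = M * (K x u * (PXY x y / ∑ x', PXY x' y)) := by ring
    have hgle : guesswork PU ≤ M * guesswork QU := guesswork_le_mul PU QU M hM0 hPUnn hPle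
    exact (div_le_iff₀ (lt_of_lt_of_le one_pos hQg)).mpr hgle
  refine le_antisymm (Real.sSup_le hub hM0.le) ?_
  -- lower bound
  refine le_of_forall_pos_le_add fun ε hε => ?_
  obtain ⟨t, htmax⟩ : ∃ t, ∀ t', f t' ≤ f t := Finite.exists_max f
  have hMt : f t = M := le_antisymm (le_ciSup hbddf t) (ciSup_le htmax)
  set x0 : X := t.1 with hx0
  set a : ℝ := ∑ y', PXY x0 y' with ha
  set q : ℝ := PXY x0 y / ∑ x', PXY x' y with hq
  have hapos : 0 < a := t.2
  have hqpos : 0 < q := habs x0 t.2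
  have hq1 : q ≤ 1 := by
    rw [hq, div_le_one hy]
    exact Finset.single_le_sum (fun x _ => hnn x y) (Finset.mem_univ x0)
  have hMaq : M = a / q := hMt.symm
  obtain ⟨n0, hn0⟩ := exists_nat_ge (2 * a * (1 - q) / (ε * q * q))
  set n : ℕ := max n0 1 with hn
  have hnpos : 0 < n := lt_of_lt_of_le one_pos (le_max_right _ _)
  have hnge : 2 * a * (1 - q) / (ε * q * q) ≤ (n : ℝ) := by
    refine le_trans hn0 ?_
    exact_mod_cast Nat.cast_le.mpr (le_max_left _ _)
  have hnR : (0:ℝ) < n := by exact_mod_cast hnpos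
  set u0 : Fin n := ⟨0, hnpos⟩ with hu0
  set K : X → Fin n → ℝ := fun x u => if x = x0 then (1:ℝ)/n else if u = u0 then 1 else 0
    with hK
  have hK0 : ∀ x u, 0 ≤ K x u := by
    intro x u; rw [hK]; dsimp only; split
    · positivity
    · split <;> norm_num
  have hK1 : ∀ x, ∑ u, K x u = 1 := by
    intro x; rw [hK]; dsimp only
    by_cases hx : x = x0
    · simp only [hx, if_true]
      rw [Finset.sum_const, Finset.card_univ, Fintype.card_fin, nsmul_eq_mul]
      field_simp
    · simp only [hx, if_false]
      rw [Finset.sum_ite_eq' univ u0 (fun _ => (1:ℝ))]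
      simp
  set PU : Fin n → ℝ := fun u => ∑ x, K x u * (∑ y', PXY x y') with hPU
  set QU : Fin n → ℝ := fun u => ∑ x, K x u * (PXY x y / ∑ x', PXY x' y) with hQU
  have hQUnn : ∀ u, 0 ≤ QU u := fun u =>
    Finset.sum_nonneg fun x _ => mul_nonneg (hK0 x u) (hcnn x)
  have hQ1 : ∑ u, QU u = 1 := by
    rw [hQU]
    rw [Finset.sum_comm]
    calc ∑ x, ∑ u, K x u * (PXY x y / ∑ x', PXY x' y)
        = ∑ x, (∑ u, K x u) * (PXY x y / ∑ x', PXY x' y) := by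
          congr 1; ext x; rw [Finset.sum_mul]
      _ = ∑ x, (PXY x y / ∑ x', PXY x' y) := by
          congr 1; ext x; rw [hK1 x, one_mul]
      _ = 1 := hcsum
  have hQg1 : (1:ℝ) ≤ guesswork QU := one_le_guesswork QU hQUnn hQ1
  have hQgpos : 0 < guesswork QU := lt_of_lt_of_le one_pos hQg1
  -- lower bound on guesswork PU
  have hPUlb : ∀ u, (1/n : ℝ) * a ≤ PU u := by
    intro u
    rw [hPU]; dsimp only
    have h1 : K x0 u * (∑ y', PXY x0 y') = (1/n : ℝ) * a := by
      rw [hK]; simp [ha]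
    rw [← h1]
    exact Finset.single_le_sum (fun x _ => mul_nonneg (hK0 x u) (hPXnn x)) (Finset.mem_univ x0)
  have hPg : a * ((n:ℝ) + 1) / 2 ≤ guesswork PU := by
    have := guesswork_ge_const PU ((1/n : ℝ) * a) (by positivity) hPUlb
    rw [Fintype.card_fin] at this
    calc a * ((n:ℝ) + 1) / 2 = (1/n : ℝ) * a * ((n:ℝ) * ((n:ℝ) + 1) / 2) := by
          field_simp
      _ ≤ guesswork PU := this
  -- upper bound on guesswork QU
  have hw : ∀ x, (∑ u : Fin n, ((u.val:ℝ) + 1) * K x u)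
      = if x = x0 then ((n:ℝ) + 1)/2 else 1 := by
    intro x; rw [hK]; dsimp only
    by_cases hx : x = x0
    · simp only [hx, if_true]
      rw [← Finset.sum_mul, sum_fin_add_one]
      field_simp
    · simp only [hx, if_false]
      simp only [mul_ite, mul_one, mul_zero]
      rw [Finset.sum_ite_eq' univ u0 (fun u => ((u.val:ℝ) + 1))]
      simp [hu0]
  have hQg : guesswork QU ≤ 1 - q + ((n:ℝ) + 1) * q / 2 := by
    have hG := guesswork_le_sum QU hQUnn (finCongr (Fintype.card_fin n).symm)
    refine le_trans hG (le_of_eq ?_)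
    calc ∑ u : Fin n, (((finCongr (Fintype.card_fin n).symm u).val : ℝ) + 1) * QU u
        = ∑ u : Fin n, ((u.val : ℝ) + 1) * QU u := by
          refine Finset.sum_congr rfl fun u _ => ?_
          simp
      _ = ∑ u : Fin n, ∑ x, (((u.val : ℝ) + 1) * K x u) * (PXY x y / ∑ x', PXY x' y) := by
          refine Finset.sum_congr rfl fun u _ => ?_
          rw [hQU]; dsimp only
          rw [Finset.mul_sum]
          exact Finset.sum_congr rfl fun x _ => by ring
      _ = ∑ x, ∑ u : Fin n, (((u.val : ℝ) + 1) * K x u) * (PXY x y / ∑ x', PXY x' y) :=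
          Finset.sum_comm
      _ = ∑ x, (∑ u : Fin n, ((u.val : ℝ) + 1) * K x u) * (PXY x y / ∑ x', PXY x' y) := by
          refine Finset.sum_congr rfl fun x _ => ?_
          rw [Finset.sum_mul]
      _ = ∑ x, ((PXY x y / ∑ x', PXY x' y)
            + (if x = x0 then (((n:ℝ) + 1)/2 - 1) * q else 0)) := by
          refine Finset.sum_congr rfl fun x _ => ?_
          rw [hw x]
          by_cases hx : x = x0
          · simp only [hx, if_true]; rw [hq]; ring
          · simp only [hx, if_false]; ring
      _ = 1 - q + ((n:ℝ) + 1) * q / 2 := by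
          rw [Finset.sum_add_distrib, hcsum,
            Finset.sum_ite_eq' univ x0 (fun _ => (((n:ℝ) + 1)/2 - 1) * q)]
          simp only [Finset.mem_univ, if_true]
          ring
  -- assemble
  have hrS : guesswork PU / guesswork QU ∈ S := ⟨n, K, hK0, hK1, rfl⟩
  have hrle : guesswork PU / guesswork QU ≤ sSup S :=
    le_csSup ⟨M, fun r hr => hub r hr⟩ hrS
  have key : M - ε ≤ guesswork PU / guesswork QU := by
    rw [le_div_iff₀ hQgpos]
    by_cases hMε : M - ε ≤ 0
    · exact le_trans (mul_nonpos_iff.mpr (Or.inr ⟨hMε, guesswork_nonneg QU hQUnn⟩))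
        (guesswork_nonneg PU (fun u => Finset.sum_nonneg fun x _ => mul_nonneg (hK0 x u) (hPXnn x)))
    · push_neg at hMε
      have hkey : 2 * a * (1 - q) ≤ (n:ℝ) * (ε * q * q) :=
        (div_le_iff₀ (by positivity)).mp hnge
      calc (M - ε) * guesswork QU
          ≤ (M - ε) * (1 - q + ((n:ℝ) + 1) * q / 2) :=
            mul_le_mul_of_nonneg_left hQg hMε.le
        _ ≤ a * ((n:ℝ) + 1) / 2 := by
            rw [hMaq]
            have e2 : a / q - ε = (a - ε * q) / q := by field_simp [mul_comm]
            rw [e2, div_mul_eq_mul_div, div_le_iff₀ hqpos]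
            nlinarith [hkey, mul_nonneg (mul_nonneg hε.le hqpos.le) (sub_nonneg.mpr hq1),
              mul_nonneg (mul_nonneg hε.le hqpos.le) hqpos.le]
        _ ≤ guesswork PU := hPg
  linarith [hrle, key]
end

section
/- Let P_{XY} be a joint probability mass function on a finite set 𝒳 × 𝒴, let y ∈ 𝒴 satisfy P_Y(y) > 0, assume P_{X|Y}(x|y) > 0 for every x ∈ 𝒳 with P_X(x) > 0, and let h : ℕ → (0, ∞) be a non-decreasing function with h(n) → ∞ as n → ∞. Then the supremum, over all finite sets 𝒰 and all channels P_{U|X}, of the ratio [min over guessing functions G of ∑_{u ∈ 𝒰} h(G(u)) P_U(u)] / [min over guessing functions G of ∑_{u ∈ 𝒰} h(G(u)) P_{U|Y}(u|y)] equals max_{x : P_X(x) > 0} P_X(x) / P_{X|Y}(x|y), i.e., the pointwise maximal h(G)-guesswork leakage equals exp(D_∞(P_X ‖ P_{X|Y=y})). -/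
open Finset

/-- The `h`-guesswork of a pmf `P` on a finite set `U`: the minimum over all
guessing functions (bijections `G : U → {1,…,n}`) of `∑ u, h(G(u)) · P(u)`. -/
noncomputable def hGuesswork {U : Type*} [Fintype U] (h : ℕ → ℝ) (P : U → ℝ) : ℝ :=
  ⨅ G : U ≃ Fin (Fintype.card U), ∑ u, h ((G u).val + 1) * P u

/-!
If `P_X ≤ M · P_{X|Y=y}` pointwise, the same holds for the output distributions of any channel,
and the guesswork is monotone and positively homogeneous in the distribution, so every ratio is at
most `M`. Conversely, let `x₀` attain `M = P_X(x₀) / P_{X|Y=y}(x₀)` and let the channel spread `x₀`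
uniformly over `m + 1` outputs while sending every other input to one fixed output. Guessing then
costs `(1 - p) h(1) + p · A_m` for the input distribution giving `x₀` mass `p`, where `A_m` is the
mean of `h(1), …, h(m + 1)`. Since `h → ∞` forces `A_m → ∞`, the ratio tends to `M`.
-/

open Filter Topology

section Guesswork

variable {U : Type*} [Fintype U] {h : ℕ → ℝ}

theorem hGuesswork_le (P : U → ℝ) (G : U ≃ Fin (Fintype.card U)) :
    hGuesswork h P ≤ ∑ u, h ((G u).val + 1) * P u :=
  ciInf_le (Set.finite_range _).bddBelow G

theorem le_hGuesswork {P : U → ℝ} {c : ℝ}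
    (hc : ∀ G : U ≃ Fin (Fintype.card U), c ≤ ∑ u, h ((G u).val + 1) * P u) :
    c ≤ hGuesswork h P :=
  have : Nonempty (U ≃ Fin (Fintype.card U)) := ⟨Fintype.equivFin U⟩
  le_ciInf hc

theorem exists_hGuesswork_eq (P : U → ℝ) :
    ∃ G : U ≃ Fin (Fintype.card U), hGuesswork h P = ∑ u, h ((G u).val + 1) * P u := by
  have : Nonempty (U ≃ Fin (Fintype.card U)) := ⟨Fintype.equivFin U⟩
  obtain ⟨G, hG⟩ := Finite.exists_min fun G : U ≃ Fin (Fintype.card U) =>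
    ∑ u, h ((G u).val + 1) * P u
  exact ⟨G, (hGuesswork_le P G).antisymm (le_hGuesswork hG)⟩

theorem sum_h_comp_equiv_eq_sum_range (G : U ≃ Fin (Fintype.card U)) :
    ∑ u, h ((G u).val + 1) = ∑ i ∈ range (Fintype.card U), h (i + 1) := by
  rw [G.sum_comp (fun j => h (j.val + 1)), Fin.sum_univ_eq_sum_range (fun i => h (i + 1))]

theorem h_one_le_hGuesswork (hmono : Monotone h) {P : U → ℝ} (hP0 : ∀ u, 0 ≤ P u)
    (hP1 : ∑ u, P u = 1) : h 1 ≤ hGuesswork h P :=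
  le_hGuesswork fun G => calc
    h 1 = ∑ u, h 1 * P u := by rw [← mul_sum, hP1, mul_one]
    _ ≤ ∑ u, h ((G u).val + 1) * P u :=
      sum_le_sum fun u _ => mul_le_mul_of_nonneg_right (hmono (by omega)) (hP0 u)

theorem hGuesswork_le_mul_of_le (hh : ∀ n, 0 ≤ h n) {P Q : U → ℝ} {c : ℝ}
    (hPQ : ∀ u, P u ≤ c * Q u) : hGuesswork h P ≤ c * hGuesswork h Q := by
  obtain ⟨G, hG⟩ := exists_hGuesswork_eq (h := h) Q
  calc hGuesswork h P ≤ ∑ u, h ((G u).val + 1) * P u := hGuesswork_le P G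
    _ ≤ ∑ u, h ((G u).val + 1) * (c * Q u) :=
      sum_le_sum fun u _ => mul_le_mul_of_nonneg_left (hPQ u) (hh _)
    _ = c * hGuesswork h Q := by
      rw [hG, mul_sum]
      exact sum_congr rfl fun u _ => by ring

end Guesswork

theorem hGuesswork_const_add_ite_zero {h : ℕ → ℝ} (hmono : Monotone h) (n : ℕ) (c : ℝ)
    {d : ℝ} (hd : 0 ≤ d) :
    hGuesswork h (fun u : Fin (n + 1) => c + if u = 0 then d else 0) =
      c * ∑ i ∈ range (n + 1), h (i + 1) + d * h 1 := by
  have hcost : ∀ G : Fin (n + 1) ≃ Fin (Fintype.card (Fin (n + 1))),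
      ∑ u, h ((G u).val + 1) * (c + if u = 0 then d else 0) =
        c * ∑ i ∈ range (n + 1), h (i + 1) + d * h ((G 0).val + 1) := by
    intro G
    simp only [mul_add, mul_ite, mul_zero, sum_add_distrib, sum_ite_eq', mem_univ, if_true,
      ← sum_mul, sum_h_comp_equiv_eq_sum_range G, Fintype.card_fin]
    ring
  refine le_antisymm ?_ (le_hGuesswork fun G => ?_)
  · calc _ ≤ _ := hGuesswork_le _ (finCongr (Fintype.card_fin (n + 1)).symm)
      _ = _ := by rw [hcost]; rfl
  · rw [hcost G]
    gcongr
    exact hmono (by omega)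

theorem tendsto_average_atTop_of_monotone {h : ℕ → ℝ} (hh : ∀ n, 0 ≤ h n) (hmono : Monotone h)
    (htop : Tendsto h atTop atTop) :
    Tendsto (fun m : ℕ => (∑ i ∈ range (m + 1), h (i + 1)) / (m + 1 : ℝ)) atTop atTop := by
  have hhalf : Tendsto (fun m : ℕ => h (m / 2 + 1) / 2) atTop atTop :=
    (htop.comp (tendsto_atTop_atTop.2 fun b => ⟨2 * b, fun m hm => by omega⟩)).atTop_div_const
      two_pos
  refine tendsto_atTop_mono (fun m => ?_) hhalf
  -- the upper half of the terms, each at least `h (m / 2 + 1)`, already makes up half the mean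
  have htail : ((m + 1 - m / 2 : ℕ) : ℝ) * h (m / 2 + 1) ≤ ∑ i ∈ range (m + 1), h (i + 1) :=
    calc _ = ∑ i ∈ Ico (m / 2) (m + 1), h (m / 2 + 1) := by simp
      _ ≤ ∑ i ∈ Ico (m / 2) (m + 1), h (i + 1) :=
        sum_le_sum fun i hi => hmono (by simp only [mem_Ico] at hi; omega)
      _ ≤ _ := sum_le_sum_of_subset_of_nonneg
        (fun i hi => by simp only [mem_Ico, mem_range] at hi ⊢; omega) fun i _ _ => hh _
  have hcard : (m + 1 : ℝ) ≤ 2 * ((m + 1 - m / 2 : ℕ) : ℝ) := by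
    exact_mod_cast (by omega : m + 1 ≤ 2 * (m + 1 - m / 2))
  rw [le_div_iff₀ (by positivity)]
  nlinarith [hh (m / 2 + 1)]

theorem tendsto_affine_div_affine {ι : Type*} {l : Filter ι} {f : ι → ℝ}
    (hf : Tendsto f l atTop) (a b a' : ℝ) {b' : ℝ} (hb' : 0 < b') :
    Tendsto (fun i => (a + b * f i) / (a' + b' * f i)) l (𝓝 (b / b')) := by
  have hden : Tendsto (fun i => a' + b' * f i) l atTop :=
    tendsto_atTop_add_const_left _ _ (hf.const_mul_atTop hb')
  have hrest : Tendsto (fun i => b / b' + (a - a' * b / b') / (a' + b' * f i)) l (𝓝 (b / b')) := by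
    simpa using (tendsto_const_nhds.div_atTop hden).const_add (b / b')
  refine hrest.congr' ?_
  filter_upwards [hden.eventually_gt_atTop 0] with i hi
  field_simp
  ring

section Spread

variable {X : Type*} [DecidableEq X]

noncomputable def spreadChannel (x₀ : X) (m : ℕ) (x : X) (u : Fin (m + 1)) : ℝ :=
  if x = x₀ then ((m + 1 : ℕ) : ℝ)⁻¹ else if u = 0 then 1 else 0

theorem spreadChannel_nonneg (x₀ : X) (m : ℕ) (x : X) (u : Fin (m + 1)) :
    0 ≤ spreadChannel x₀ m x u := by
  unfold spreadChannel
  split_ifs <;> positivity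

theorem sum_spreadChannel (x₀ : X) (m : ℕ) (x : X) : ∑ u, spreadChannel x₀ m x u = 1 := by
  by_cases hx : x = x₀
  · simp [spreadChannel, hx]
    field_simp
  · simp [spreadChannel, hx]

end Spread

section Channel

variable {X U : Type*} [Fintype X]

def channelOutput (K : X → U → ℝ) (R : X → ℝ) (u : U) : ℝ := ∑ x, K x u * R x

theorem channelOutput_nonneg {K : X → U → ℝ} {R : X → ℝ} (hK0 : ∀ x u, 0 ≤ K x u)
    (hR0 : ∀ x, 0 ≤ R x) (u : U) : 0 ≤ channelOutput K R u :=
  sum_nonneg fun x _ => mul_nonneg (hK0 x u) (hR0 x)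

theorem sum_channelOutput [Fintype U] {K : X → U → ℝ} (hK1 : ∀ x, ∑ u, K x u = 1)
    (R : X → ℝ) : ∑ u, channelOutput K R u = ∑ x, R x := by
  simp only [channelOutput]
  rw [sum_comm]
  simp only [← sum_mul, hK1, one_mul]

theorem channelOutput_le_mul {K : X → U → ℝ} (hK0 : ∀ x u, 0 ≤ K x u) {R S : X → ℝ} {c : ℝ}
    (hRS : ∀ x, R x ≤ c * S x) (u : U) : channelOutput K R u ≤ c * channelOutput K S u := by
  rw [channelOutput, channelOutput, mul_sum]
  exact sum_le_sum fun x _ => by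
    rw [mul_left_comm]
    exact mul_le_mul_of_nonneg_left (hRS x) (hK0 x u)

variable [DecidableEq X]

theorem channelOutput_spreadChannel (x₀ : X) (m : ℕ) (R : X → ℝ) :
    channelOutput (spreadChannel x₀ m) R =
      fun u => ((m + 1 : ℕ) : ℝ)⁻¹ * R x₀ + if u = 0 then ∑ x, R x - R x₀ else 0 := by
  ext u
  rw [channelOutput, ← add_sum_erase _ _ (mem_univ x₀), ← sum_erase_eq_sub (mem_univ x₀)]
  congr 1
  · simp [spreadChannel]
  · split_ifs with hu
    · exact sum_congr rfl fun x hx => by simp [spreadChannel, ne_of_mem_erase hx, hu]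
    · exact sum_eq_zero fun x hx => by simp [spreadChannel, ne_of_mem_erase hx, hu]

theorem hGuesswork_channelOutput_spreadChannel {h : ℕ → ℝ} (hmono : Monotone h) (x₀ : X)
    (m : ℕ) {R : X → ℝ} (hR0 : ∀ x, 0 ≤ R x) :
    hGuesswork h (channelOutput (spreadChannel x₀ m) R) =
      (∑ x, R x - R x₀) * h 1 + R x₀ * ((∑ i ∈ range (m + 1), h (i + 1)) / (m + 1 : ℝ)) := by
  rw [channelOutput_spreadChannel, hGuesswork_const_add_ite_zero hmono m _
    (sub_nonneg.2 (single_le_sum (fun x _ => hR0 x) (mem_univ x₀)))]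
  push_cast
  ring

end Channel

section Leakage

variable {X : Type*} [Fintype X] {h : ℕ → ℝ} {P Q : X → ℝ}

def guessworkRatios (h : ℕ → ℝ) (P Q : X → ℝ) : Set ℝ :=
  {r | ∃ (n : ℕ) (K : X → Fin n → ℝ), (∀ x u, 0 ≤ K x u) ∧ (∀ x, ∑ u, K x u = 1) ∧
    r = hGuesswork h (channelOutput K P) / hGuesswork h (channelOutput K Q)}

theorem le_of_mem_guessworkRatios (hpos : ∀ n, 0 < h n) (hmono : Monotone h)
    (hQ0 : ∀ x, 0 ≤ Q x) (hQ1 : ∑ x, Q x = 1) {c : ℝ} (hPQ : ∀ x, P x ≤ c * Q x) {r : ℝ}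
    (hr : r ∈ guessworkRatios h P Q) : r ≤ c := by
  obtain ⟨n, K, hK0, hK1, rfl⟩ := hr
  have hden : 0 < hGuesswork h (channelOutput K Q) :=
    (hpos 1).trans_le <| h_one_le_hGuesswork hmono (channelOutput_nonneg hK0 hQ0)
      (by rw [sum_channelOutput hK1, hQ1])
  rw [div_le_iff₀ hden]
  exact hGuesswork_le_mul_of_le (fun n => (hpos n).le) (channelOutput_le_mul hK0 hPQ)

theorem tendsto_spreadChannel_ratio [DecidableEq X] (hh : ∀ n, 0 ≤ h n) (hmono : Monotone h)
    (htop : Tendsto h atTop atTop) (hP0 : ∀ x, 0 ≤ P x) (hQ0 : ∀ x, 0 ≤ Q x) {x₀ : X}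
    (hx₀ : 0 < Q x₀) :
    Tendsto (fun m => hGuesswork h (channelOutput (spreadChannel x₀ m) P) /
      hGuesswork h (channelOutput (spreadChannel x₀ m) Q)) atTop (𝓝 (P x₀ / Q x₀)) := by
  simp only [hGuesswork_channelOutput_spreadChannel hmono x₀ _ hP0,
    hGuesswork_channelOutput_spreadChannel hmono x₀ _ hQ0]
  exact tendsto_affine_div_affine
    (tendsto_average_atTop_of_monotone hh hmono htop) _ _ _ hx₀

theorem sSup_guessworkRatios (hpos : ∀ n, 0 < h n) (hmono : Monotone h)
    (htop : Tendsto h atTop atTop) (hP0 : ∀ x, 0 ≤ P x) (hQ0 : ∀ x, 0 ≤ Q x)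
    (hP1 : ∑ x, P x = 1) (hQ1 : ∑ x, Q x = 1) (habs : ∀ x, 0 < P x → 0 < Q x) :
    sSup (guessworkRatios h P Q) = ⨆ x : {x // 0 < P x}, P x / Q x := by
  classical
  obtain ⟨x, -, hx⟩ := exists_lt_of_sum_lt (by simp [hP1] : ∑ x : X, (0 : ℝ) < ∑ x, P x)
  have : Nonempty {x // 0 < P x} := ⟨⟨x, hx⟩⟩
  obtain ⟨x₀, hmax⟩ := Finite.exists_max fun x : {x // 0 < P x} => P x / Q x
  have hiSup : ⨆ x : {x // 0 < P x}, P x / Q x = P x₀ / Q x₀ :=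
    le_antisymm (ciSup_le hmax)
      (le_ciSup (f := fun x : {x // 0 < P x} => P x / Q x) (Finite.bddAbove_range _) x₀)
  have hPQ : ∀ x, P x ≤ P x₀ / Q x₀ * Q x := fun x => by
    rcases (hP0 x).eq_or_lt with hx | hx
    · rw [← hx]
      exact mul_nonneg (div_nonneg (hP0 x₀) (hQ0 x₀)) (hQ0 x)
    · exact (div_le_iff₀ (habs x hx)).1 (hmax ⟨x, hx⟩)
  have hub : ∀ r ∈ guessworkRatios h P Q, r ≤ P x₀ / Q x₀ :=
    fun r => le_of_mem_guessworkRatios hpos hmono hQ0 hQ1 hPQ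
  have hmem : ∀ m, hGuesswork h (channelOutput (spreadChannel x₀.1 m) P) /
      hGuesswork h (channelOutput (spreadChannel x₀.1 m) Q) ∈ guessworkRatios h P Q :=
    fun m => ⟨m + 1, spreadChannel x₀.1 m, spreadChannel_nonneg x₀.1 m,
      sum_spreadChannel x₀.1 m, rfl⟩
  rw [hiSup]
  refine le_antisymm (csSup_le ⟨_, hmem 0⟩ hub) <|
    le_of_tendsto'
      (tendsto_spreadChannel_ratio (fun n => (hpos n).le) hmono htop hP0 hQ0 (habs _ x₀.2))
      fun m => le_csSup ⟨_, hub⟩ (hmem m)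

end Leakage

/-- **Pointwise maximal `h(G)`-guesswork leakage.**
Let `P_{XY}` be a joint pmf on a finite set `𝒳 × 𝒴`, let `y` satisfy `P_Y(y) > 0`,
assume `P_{X|Y}(x|y) > 0` whenever `P_X(x) > 0`, and let `h : ℕ → (0,∞)` be
non-decreasing with `h(n) → ∞`.  Then the supremum, over all finite sets `𝒰`
(wlog `Fin n`) and channels `P_{U|X}`, of the ratio
`[min_G ∑ h(G(u)) P_U(u)] / [min_G ∑ h(G(u)) P_{U|Y}(u|y)]` equals
`max_{x : P_X(x)>0} P_X(x)/P_{X|Y}(x|y) = exp (D_∞(P_X ‖ P_{X|Y=y}))`. -/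
theorem pointwise_maximal_hG_guesswork_leakage
    {X Y : Type*} [Fintype X] [Fintype Y]
    (PXY : X → Y → ℝ)
    (hnn : ∀ x y, 0 ≤ PXY x y)
    (hsum : ∑ x, ∑ y, PXY x y = 1)
    (y : Y)
    (hy : 0 < ∑ x, PXY x y)
    (habs : ∀ x, 0 < ∑ y', PXY x y' → 0 < PXY x y / ∑ x', PXY x' y)
    (h : ℕ → ℝ)
    (hpos : ∀ n, 0 < h n)
    (hmono : Monotone h)
    (htop : Filter.Tendsto h Filter.atTop Filter.atTop) :
    sSup {r : ℝ | ∃ (n : ℕ) (K : X → Fin n → ℝ),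
        (∀ x u, 0 ≤ K x u) ∧ (∀ x, ∑ u, K x u = 1) ∧
        r = hGuesswork h (fun u => ∑ x, K x u * (∑ y', PXY x y')) /
            hGuesswork h (fun u => ∑ x, K x u * (PXY x y / ∑ x', PXY x' y))} =
      ⨆ x : {x : X // 0 < ∑ y', PXY x y'},
        (∑ y', PXY x.1 y') / (PXY x.1 y / ∑ x', PXY x' y) :=
  sSup_guessworkRatios hpos hmono htop (fun x => sum_nonneg fun y' _ => hnn x y')
    (fun x => div_nonneg (hnn x y) hy.le) hsum (by rw [← sum_div, div_self hy.ne']) habs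
end

section
/- Let p ∈ [0,1) and let P_{XY} be the binary erasure source on {0,1} × {0, e, 1} given by P_{XY}(i,i) = (1−p)/2 and P_{XY}(i,e) = p/2 for i ∈ {0,1}. Then the maximal guesswork leakage, i.e. the supremum over all finite sets 𝒰 and all channels P_{U|X} of the ratio γ(P_U) / [∑_{y : P_Y(y) > 0} P_Y(y) γ(P_{U|Y}(·|y))], equals 2/(1+p). -/
open Finset

/-- The binary erasure source on `{0,1} × {0, e, 1}` with erasure probability `p`:
`P_{XY}(i,i) = (1-p)/2` and `P_{XY}(i,e) = p/2` for `i ∈ {0,1}`.  Here `𝒳 = Bool`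
and `𝒴 = Option Bool`, with `none` playing the role of the erasure symbol `e`. -/
noncomputable def besPXY (p : ℝ) : Bool → Option Bool → ℝ := fun i oy =>
  match oy with
  | none => p / 2
  | some j => if i = j then (1 - p) / 2 else 0

/-! ### Auxiliary guesswork machinery -/

noncomputable def gw (n : ℕ) (P : Fin n → ℝ) : ℝ :=
  ⨅ G : Equiv.Perm (Fin n), ∑ u, ((G u).val + 1 : ℝ) * P u

lemma gw_le (n : ℕ) (P : Fin n → ℝ) (G : Equiv.Perm (Fin n)) :
    gw n P ≤ ∑ u, ((G u).val + 1 : ℝ) * P u :=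
  ciInf_le (Set.Finite.bddBelow (Set.finite_range _)) _

lemma guesswork_eq_gw (n : ℕ) (P : Fin n → ℝ) : guesswork P = gw n P := by
  haveI : Nonempty (Fin n ≃ Fin (Fintype.card (Fin n))) := ⟨finCongr (Fintype.card_fin n).symm⟩
  apply le_antisymm
  · apply le_ciInf
    intro G
    calc guesswork P
        ≤ ∑ u, (((G.trans (finCongr (Fintype.card_fin n).symm)) u).val + 1 : ℝ) * P u :=
          ciInf_le (Set.Finite.bddBelow (Set.finite_range _)) _
      _ = ∑ u, ((G u).val + 1 : ℝ) * P u := by simp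
  · apply le_ciInf
    intro G
    calc gw n P
        ≤ ∑ u, (((G.trans (finCongr (Fintype.card_fin n))) u).val + 1 : ℝ) * P u :=
          ciInf_le (Set.Finite.bddBelow (Set.finite_range _)) _
      _ = ∑ u, ((G u).val + 1 : ℝ) * P u := by simp

lemma one_le_gw (n : ℕ) (P : Fin n → ℝ) (hP : ∀ u, 0 ≤ P u) (hs : ∑ u, P u = 1) :
    1 ≤ gw n P := by
  apply le_ciInf
  intro G
  calc (1:ℝ) = ∑ u, P u := hs.symm
    _ ≤ ∑ u, ((G u).val + 1 : ℝ) * P u := by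
        apply Finset.sum_le_sum
        intro u _
        nlinarith [hP u, (G u).val.cast_nonneg (α := ℝ)]

lemma exists_gw_eq (n : ℕ) (P : Fin n → ℝ) :
    ∃ G : Equiv.Perm (Fin n), gw n P = ∑ u, ((G u).val + 1 : ℝ) * P u := by
  obtain ⟨G, -, hG⟩ := Finset.exists_min_image (univ : Finset (Equiv.Perm (Fin n)))
    (fun G => ∑ u, ((G u).val + 1 : ℝ) * P u) ⟨1, mem_univ 1⟩
  exact ⟨G, le_antisymm (gw_le n P G) (le_ciInf fun G' => hG G' (mem_univ _))⟩

lemma exists_interleave (n : ℕ) (G0 G1 : Equiv.Perm (Fin n)) :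
    ∃ G : Equiv.Perm (Fin n), ∀ u,
      ((G u).val + 1) ≤ 2 * (min (G0 u).val (G1 u).val + 1) := by
  set f : Fin n → ℕ := fun u => min (G0 u).val (G1 u).val with hf
  set σ := Tuple.sort f with hσ
  refine ⟨σ.symm, fun u => ?_⟩
  set i := σ.symm u with hi
  have hσi : σ i = u := σ.apply_symm_apply u
  have hmono : Monotone (f ∘ σ) := Tuple.monotone_sort f
  set S : Finset (Fin n) := univ.filter (fun u' => f u' ≤ f u) with hS
  have h1 : i.val + 1 ≤ S.card := by
    have hsub : (Finset.Iic i).image σ ⊆ S := by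
      intro v hv
      simp only [Finset.mem_image, Finset.mem_Iic] at hv
      obtain ⟨j, hj, rfl⟩ := hv
      simp only [hS, Finset.mem_filter, Finset.mem_univ, true_and]
      calc f (σ j) ≤ f (σ i) := hmono hj
        _ = f u := by rw [hσi]
    calc i.val + 1 = (Finset.Iic i).card := (Fin.card_Iic i).symm
      _ = ((Finset.Iic i).image σ).card := (Finset.card_image_of_injective _ σ.injective).symm
      _ ≤ S.card := Finset.card_le_card hsub
  have h2 : S.card ≤ 2 * (f u + 1) := by
    have hA : ∀ G' : Equiv.Perm (Fin n),
        (univ.filter (fun u' => (G' u').val ≤ f u)).card ≤ f u + 1 := by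
      intro G'
      have := Finset.card_le_card_of_injOn (fun u' => (G' u').val)
        (s := univ.filter (fun u' => (G' u').val ≤ f u)) (t := Finset.range (f u + 1))
        (by intro x hx
            simp only [Finset.mem_coe, Finset.mem_filter] at hx
            simpa [Nat.lt_succ_iff] using hx.2)
        (by intro a _ b _ hab
            exact G'.injective (Fin.val_injective hab))
      simpa using this
    have hsub : S ⊆ (univ.filter (fun u' => (G0 u').val ≤ f u)) ∪
        (univ.filter (fun u' => (G1 u').val ≤ f u)) := by
      intro v hv
      simp only [hS, Finset.mem_filter, Finset.mem_univ, true_and] at hv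
      simp only [Finset.mem_union, Finset.mem_filter, Finset.mem_univ, true_and]
      simp only [hf] at hv ⊢
      rcases min_cases (G0 v).val (G1 v).val with ⟨h, _⟩ | ⟨h, _⟩
      · left; omega
      · right; omega
    calc S.card ≤ _ := Finset.card_le_card hsub
      _ ≤ _ := Finset.card_union_le _ _
      _ ≤ (f u + 1) + (f u + 1) := Nat.add_le_add (hA G0) (hA G1)
      _ = 2 * (f u + 1) := by ring
  have := le_trans h1 h2
  simp only [hf] at this
  simpa [hi] using this

lemma gw_mix_le (n : ℕ) (K0 K1 : Fin n → ℝ) (h0 : ∀ u, 0 ≤ K0 u) (h1 : ∀ u, 0 ≤ K1 u) :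
    gw n (fun u => (K0 u + K1 u) / 2) ≤ gw n K0 + gw n K1 := by
  obtain ⟨G0, hG0⟩ := exists_gw_eq n K0
  obtain ⟨G1, hG1⟩ := exists_gw_eq n K1
  obtain ⟨G, hG⟩ := exists_interleave n G0 G1
  calc gw n (fun u => (K0 u + K1 u) / 2)
      ≤ ∑ u, ((G u).val + 1 : ℝ) * ((K0 u + K1 u) / 2) := gw_le n _ G
    _ ≤ ∑ u, (((G0 u).val + 1 : ℝ) * K0 u + ((G1 u).val + 1 : ℝ) * K1 u) := by
        apply Finset.sum_le_sum
        intro u _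
        have c0 : ((G u).val + 1 : ℝ) ≤ 2 * ((G0 u).val + 1) := by
          have : (G u).val + 1 ≤ 2 * ((G0 u).val + 1) := by
            have := hG u; have := min_le_left (G0 u).val (G1 u).val; omega
          exact_mod_cast this
        have c1 : ((G u).val + 1 : ℝ) ≤ 2 * ((G1 u).val + 1) := by
          have : (G u).val + 1 ≤ 2 * ((G1 u).val + 1) := by
            have := hG u; have := min_le_right (G0 u).val (G1 u).val; omega
          exact_mod_cast this
        nlinarith [h0 u, h1 u]
    _ = gw n K0 + gw n K1 := by rw [hG0, hG1, Finset.sum_add_distrib]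

/-! ### BES computations -/

lemma bes_sumy (p : ℝ) (x : Bool) : ∑ y' : Option Bool, besPXY p x y' = 1/2 := by
  cases x <;> simp [besPXY, Fintype.sum_option, Fintype.sum_bool] <;> ring

lemma bes_sumx_none (p : ℝ) : ∑ x : Bool, besPXY p x none = p := by
  simp [besPXY, Fintype.sum_bool]; ring

lemma bes_sumx_some (p : ℝ) (j : Bool) : ∑ x : Bool, besPXY p x (some j) = (1-p)/2 := by
  cases j <;> simp [besPXY, Fintype.sum_bool]

lemma cond_some (p : ℝ) (hp1 : p < 1) (n : ℕ) (K : Bool → Fin n → ℝ) (j : Bool) :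
    (fun u => ∑ x, K x u * (besPXY p x (some j) / ∑ x', besPXY p x' (some j))) = K j := by
  have hne : (1-p)/2 ≠ 0 := ne_of_gt (by linarith)
  funext u
  rw [show (∑ x', besPXY p x' (some j)) = (1-p)/2 from bes_sumx_some p j]
  cases j <;> simp [Fintype.sum_bool, besPXY, div_self hne]

lemma cond_none (p : ℝ) (hp : 0 < p) (n : ℕ) (K : Bool → Fin n → ℝ) :
    (fun u => ∑ x, K x u * (besPXY p x none / ∑ x', besPXY p x' none)) =
      fun u => (K false u + K true u) / 2 := by
  have hne : p ≠ 0 := ne_of_gt hp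
  funext u
  rw [show (∑ x', besPXY p x' none) = p from bes_sumx_none p]
  simp only [Fintype.sum_bool, besPXY]
  field_simp
  ring

lemma num_fun (p : ℝ) (n : ℕ) (K : Bool → Fin n → ℝ) :
    (fun u => ∑ x, K x u * (∑ y', besPXY p x y')) =
      fun u => (K false u + K true u) / 2 := by
  funext u
  simp only [bes_sumy, Fintype.sum_bool]
  ring

lemma denom_sum (p : ℝ) (hp0 : 0 ≤ p) (hp1 : p < 1) (g : Option Bool → ℝ) :
    ∑ y ∈ univ.filter (fun y => 0 < ∑ x, besPXY p x y), (∑ x, besPXY p x y) * g y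
    = p * g none + (1-p)/2 * g (some false) + (1-p)/2 * g (some true) := by
  have h2 : (0:ℝ) < (1-p)/2 := by linarith
  rcases eq_or_lt_of_le hp0 with hp | hp
  · obtain rfl : p = 0 := hp.symm
    have hfil : univ.filter (fun y => 0 < ∑ x, besPXY (0:ℝ) x y) =
        ({some false, some true} : Finset (Option Bool)) := by
      ext y
      simp only [Finset.mem_filter, Finset.mem_univ, true_and, Finset.mem_insert,
        Finset.mem_singleton]
      cases y with
      | none => rw [bes_sumx_none]; simp
      | some j => rw [bes_sumx_some]; cases j <;> simp [h2]
    rw [hfil, Finset.sum_insert (by simp), Finset.sum_singleton,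
      bes_sumx_some, bes_sumx_some]
    ring
  · have hfil : univ.filter (fun y => 0 < ∑ x, besPXY p x y) = univ := by
      apply Finset.filter_true_of_mem
      intro y _
      cases y with
      | none => rw [bes_sumx_none]; exact hp
      | some j => rw [bes_sumx_some]; exact h2
    rw [hfil]
    rw [show ∑ y : Option Bool, (∑ x, besPXY p x y) * g y
        = (∑ x, besPXY p x none) * g none
          + ((∑ x, besPXY p x (some false)) * g (some false)
            + (∑ x, besPXY p x (some true)) * g (some true)) from by
      rw [Fintype.sum_option]; congr 1; rw [Fintype.sum_bool]; ring]
    rw [bes_sumx_none, bes_sumx_some, bes_sumx_some]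
    ring

lemma expr_eq (p : ℝ) (hp0 : 0 ≤ p) (hp1 : p < 1) (n : ℕ) (K : Bool → Fin n → ℝ) :
    guesswork (fun u => ∑ x, K x u * (∑ y', besPXY p x y')) /
      ∑ y ∈ univ.filter (fun y => 0 < ∑ x, besPXY p x y),
        (∑ x, besPXY p x y) *
          guesswork (fun u => ∑ x, K x u * (besPXY p x y / ∑ x', besPXY p x' y))
    = gw n (fun u => (K false u + K true u) / 2) /
      (p * gw n (fun u => (K false u + K true u) / 2)
        + (1-p)/2 * (gw n (K false) + gw n (K true))) := by
  rw [num_fun, guesswork_eq_gw]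
  rw [denom_sum p hp0 hp1]
  congr 1
  have hsome : ∀ j : Bool,
      guesswork (fun u => ∑ x, K x u * (besPXY p x (some j) / ∑ x', besPXY p x' (some j)))
        = gw n (K j) := by
    intro j; rw [cond_some p hp1 n K j, guesswork_eq_gw]
  have hnone : p * guesswork (fun u => ∑ x, K x u * (besPXY p x none / ∑ x', besPXY p x' none))
      = p * gw n (fun u => (K false u + K true u) / 2) := by
    rcases eq_or_lt_of_le hp0 with hp | hp
    · rw [← hp]; ring
    · rw [cond_none p hp n K, guesswork_eq_gw]
  rw [hsome, hsome, hnone]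
  ring

/-! ### The extremal construction -/

lemma sum_range_add_one (N : ℕ) : ∑ i ∈ Finset.range N, ((i : ℝ) + 1) = N * (N + 1) / 2 := by
  induction N with
  | zero => simp
  | succ k ih => rw [Finset.sum_range_succ, ih]; push_cast; ring

lemma sum_fin_val_add_one (N : ℕ) : ∑ v : Fin N, ((v.val : ℝ) + 1) = N * (N + 1) / 2 := by
  rw [Fin.sum_univ_eq_sum_range (fun i => (i : ℝ) + 1) N, sum_range_add_one]

lemma gw_const (n : ℕ) (c : ℝ) : gw n (fun _ => c) = n * (n + 1) / 2 * c := by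
  have key : ∀ G : Equiv.Perm (Fin n),
      ∑ u, ((G u).val + 1 : ℝ) * c = n * (n + 1) / 2 * c := by
    intro G
    rw [show ∑ u, ((G u).val + 1 : ℝ) * c = ∑ u, (fun v : Fin n => ((v.val : ℝ) + 1) * c) (G u)
      from rfl, Equiv.sum_comp G (fun v : Fin n => ((v.val : ℝ) + 1) * c),
      ← Finset.sum_mul, sum_fin_val_add_one]
  apply le_antisymm
  · exact le_of_le_of_eq (gw_le n _ 1) (key 1)
  · exact le_ciInf fun G => (key G).ge

def swapHalf (m : ℕ) : Equiv.Perm (Fin (2 * m)) :=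
  Function.Involutive.toPerm
    (fun u => ⟨if u.val < m then u.val + m else u.val - m,
      by have := u.isLt; split_ifs <;> omega⟩)
    (by
      intro u
      apply Fin.ext
      have := u.isLt
      simp only
      split_ifs <;> omega)

lemma swapHalf_val (m : ℕ) (u : Fin (2 * m)) :
    (swapHalf m u).val = if u.val < m then u.val + m else u.val - m := rfl

lemma sum_K0 (m : ℕ) (hm : 0 < m) :
    ∑ u : Fin (2 * m), (if u.val < m then (m : ℝ)⁻¹ else 0) = 1 := by
  rw [Fin.sum_univ_eq_sum_range (fun i => if i < m then (m : ℝ)⁻¹ else 0) (2 * m)]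
  rw [Finset.range_eq_Ico, ← Finset.sum_Ico_consecutive _ (Nat.zero_le m) (by omega : m ≤ 2 * m)]
  rw [show ∑ i ∈ Finset.Ico 0 m, (if i < m then (m : ℝ)⁻¹ else 0) = ∑ i ∈ Finset.Ico 0 m, (m:ℝ)⁻¹
    from Finset.sum_congr rfl fun i hi => by simp [Finset.mem_Ico.mp hi |>.2]]
  rw [show ∑ i ∈ Finset.Ico m (2*m), (if i < m then (m : ℝ)⁻¹ else 0) = 0
    from Finset.sum_eq_zero fun i hi => by simp [Nat.not_lt.mpr (Finset.mem_Ico.mp hi).1]]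
  simp [Nat.card_Ico]
  field_simp

lemma sum_K1 (m : ℕ) (hm : 0 < m) :
    ∑ u : Fin (2 * m), (if u.val < m then 0 else (m : ℝ)⁻¹) = 1 := by
  rw [Fin.sum_univ_eq_sum_range (fun i => if i < m then 0 else (m : ℝ)⁻¹) (2 * m)]
  rw [Finset.range_eq_Ico, ← Finset.sum_Ico_consecutive _ (Nat.zero_le m) (by omega : m ≤ 2 * m)]
  rw [show ∑ i ∈ Finset.Ico 0 m, (if i < m then 0 else (m : ℝ)⁻¹) = 0
    from Finset.sum_eq_zero fun i hi => by simp [Finset.mem_Ico.mp hi |>.2]]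
  rw [show ∑ i ∈ Finset.Ico m (2*m), (if i < m then 0 else (m : ℝ)⁻¹) = ∑ i ∈ Finset.Ico m (2*m), (m:ℝ)⁻¹
    from Finset.sum_congr rfl fun i hi => by simp [Nat.not_lt.mpr (Finset.mem_Ico.mp hi).1]]
  simp [Nat.card_Ico, show 2 * m - m = m by omega]
  field_simp

lemma sum_b0 (m : ℕ) (hm : 0 < m) :
    ∑ u : Fin (2 * m), ((u.val : ℝ) + 1) * (if u.val < m then (m : ℝ)⁻¹ else 0)
      = (m + 1) / 2 := by
  rw [Fin.sum_univ_eq_sum_range (fun i => ((i:ℝ) + 1) * (if i < m then (m : ℝ)⁻¹ else 0)) (2 * m)]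
  rw [Finset.range_eq_Ico, ← Finset.sum_Ico_consecutive _ (Nat.zero_le m) (by omega : m ≤ 2 * m)]
  rw [show ∑ i ∈ Finset.Ico m (2*m), ((i:ℝ) + 1) * (if i < m then (m : ℝ)⁻¹ else 0) = 0
    from Finset.sum_eq_zero fun i hi => by simp [Nat.not_lt.mpr (Finset.mem_Ico.mp hi).1]]
  rw [show ∑ i ∈ Finset.Ico 0 m, ((i:ℝ) + 1) * (if i < m then (m : ℝ)⁻¹ else 0)
      = ∑ i ∈ Finset.Ico 0 m, ((i:ℝ) + 1) * (m:ℝ)⁻¹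
    from Finset.sum_congr rfl fun i hi => by simp [Finset.mem_Ico.mp hi |>.2]]
  rw [← Finset.range_eq_Ico, ← Finset.sum_mul, sum_range_add_one]
  have : (m:ℝ) ≠ 0 := Nat.cast_ne_zero.mpr hm.ne'
  field_simp
  ring

lemma sum_b1 (m : ℕ) (hm : 0 < m) :
    ∑ u : Fin (2 * m), (((swapHalf m u).val : ℝ) + 1) * (if u.val < m then 0 else (m : ℝ)⁻¹)
      = (m + 1) / 2 := by
  have hval : ∀ u : Fin (2*m), (((swapHalf m u).val : ℝ) + 1) * (if u.val < m then 0 else (m : ℝ)⁻¹)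
      = (fun i : ℕ => (((if i < m then i + m else i - m : ℕ) : ℝ) + 1) * (if i < m then 0 else (m : ℝ)⁻¹)) u.val := by
    intro u; rw [swapHalf_val]
  rw [Finset.sum_congr rfl (fun u _ => hval u),
    Fin.sum_univ_eq_sum_range (fun i => (((if i < m then i + m else i - m : ℕ) : ℝ) + 1) * (if i < m then 0 else (m : ℝ)⁻¹)) (2 * m)]
  rw [Finset.range_eq_Ico, ← Finset.sum_Ico_consecutive _ (Nat.zero_le m) (by omega : m ≤ 2 * m)]
  rw [show ∑ i ∈ Finset.Ico 0 m, (((if i < m then i + m else i - m : ℕ) : ℝ) + 1) * (if i < m then 0 else (m : ℝ)⁻¹) = 0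
    from Finset.sum_eq_zero fun i hi => by simp [Finset.mem_Ico.mp hi |>.2]]
  rw [Finset.sum_Ico_eq_sum_range]
  rw [show ∑ i ∈ Finset.range (2*m - m), (((if m + i < m then m + i + m else m + i - m : ℕ) : ℝ) + 1) * (if m + i < m then 0 else (m : ℝ)⁻¹)
      = ∑ i ∈ Finset.range m, ((i:ℝ) + 1) * (m:ℝ)⁻¹ from by
    rw [show 2*m - m = m by omega]
    refine Finset.sum_congr rfl fun i _ => ?_
    rw [if_neg (by omega), if_neg (by omega), show m + i - m = i by omega]]
  rw [← Finset.sum_mul, sum_range_add_one]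
  have : (m:ℝ) ≠ 0 := Nat.cast_ne_zero.mpr hm.ne'
  field_simp
  ring

/-- **Maximal guesswork leakage for the binary erasure source.**
For `p ∈ [0,1)`, the supremum over all finite sets `𝒰` (wlog `Fin n`) and all
channels `P_{U|X}` of `γ(P_U) / ∑_{y : P_Y(y)>0} P_Y(y) γ(P_{U|Y}(·|y))`
equals `2/(1+p)`. -/
theorem maximal_guesswork_leakage_BES (p : ℝ) (hp0 : 0 ≤ p) (hp1 : p < 1) :
    sSup {r : ℝ | ∃ (n : ℕ) (K : Bool → Fin n → ℝ),
        (∀ x u, 0 ≤ K x u) ∧ (∀ x, ∑ u, K x u = 1) ∧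
        r = guesswork (fun u => ∑ x, K x u * (∑ y', besPXY p x y')) /
            ∑ y ∈ univ.filter (fun y => 0 < ∑ x, besPXY p x y),
              (∑ x, besPXY p x y) *
                guesswork (fun u =>
                  ∑ x, K x u * (besPXY p x y / ∑ x', besPXY p x' y))} =
      2 / (1 + p) := by
  have h1p : (0:ℝ) < 1 + p := by linarith
  set S : Set ℝ := {r : ℝ | ∃ (n : ℕ) (K : Bool → Fin n → ℝ),
        (∀ x u, 0 ≤ K x u) ∧ (∀ x, ∑ u, K x u = 1) ∧
        r = guesswork (fun u => ∑ x, K x u * (∑ y', besPXY p x y')) /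
            ∑ y ∈ univ.filter (fun y => 0 < ∑ x, besPXY p x y),
              (∑ x, besPXY p x y) *
                guesswork (fun u =>
                  ∑ x, K x u * (besPXY p x y / ∑ x', besPXY p x' y))} with hS
  -- Upper bound on every element of S
  have hub : ∀ r ∈ S, r ≤ 2 / (1 + p) := by
    rintro r hr
    rw [hS] at hr
    obtain ⟨n, K, hKnn, hK1, rfl⟩ := hr
    rw [expr_eq p hp0 hp1 n K]
    rcases Nat.eq_zero_or_pos n with rfl | hn
    · exfalso; simpa using hK1 false
    have hMnn : ∀ u, 0 ≤ (K false u + K true u) / 2 := fun u => by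
      have := hKnn false u; have := hKnn true u; linarith
    have hM1 : ∑ u, (K false u + K true u) / 2 = 1 := by
      rw [← Finset.sum_div, Finset.sum_add_distrib, hK1, hK1]; norm_num
    have ha := one_le_gw n _ hMnn hM1
    have hb0 := one_le_gw n (K false) (hKnn false) (hK1 false)
    have hb1 := one_le_gw n (K true) (hKnn true) (hK1 true)
    have hmix := gw_mix_le n (K false) (K true) (hKnn false) (hKnn true)
    set a := gw n (fun u => (K false u + K true u) / 2) with hadef
    set b0 := gw n (K false)
    set b1 := gw n (K true)
    have hD : 0 < p * a + (1-p)/2 * (b0 + b1) := by nlinarith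
    rw [div_le_div_iff₀ hD h1p]
    nlinarith [mul_nonneg (by linarith : (0:ℝ) ≤ 1 - p) (by linarith : 0 ≤ b0 + b1 - a)]
  -- Elements approaching the supremum
  have hmem : ∀ m : ℕ, 0 < m → ∃ r ∈ S, (2*(m:ℝ)+1)/((1+p)*m+1) ≤ r := by
    intro m hm
    have hm0 : (m:ℝ) ≠ 0 := Nat.cast_ne_zero.mpr hm.ne'
    set L : Bool → Fin (2*m) → ℝ := fun x u =>
      if u.val < m then (if x then 0 else (m:ℝ)⁻¹) else (if x then (m:ℝ)⁻¹ else 0) with hL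
    have hLf : L false = fun u : Fin (2*m) => if u.val < m then (m:ℝ)⁻¹ else 0 := by
      funext u; simp [hL]
    have hLt : L true = fun u : Fin (2*m) => if u.val < m then 0 else (m:ℝ)⁻¹ := by
      funext u; simp [hL]
    have hLnn : ∀ x u, 0 ≤ L x u := by
      intro x u; simp only [hL]; split_ifs <;> positivity
    have hLsum : ∀ x, ∑ u, L x u = 1 := by
      intro x
      cases x
      · rw [show (∑ u, L false u) = ∑ u : Fin (2*m), (if u.val < m then (m:ℝ)⁻¹ else 0) from by
          rw [hLf]]
        exact sum_K0 m hm
      · rw [show (∑ u, L true u) = ∑ u : Fin (2*m), (if u.val < m then 0 else (m:ℝ)⁻¹) from by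
          rw [hLt]]
        exact sum_K1 m hm
    refine ⟨_, ⟨2*m, L, hLnn, hLsum, rfl⟩, ?_⟩
    rw [expr_eq p hp0 hp1 (2*m) L]
    have hMfun : (fun u : Fin (2*m) => (L false u + L true u) / 2) = fun _ => (m:ℝ)⁻¹ / 2 := by
      funext u
      by_cases h : u.val < m <;> simp [hL, h]
    have hA : gw (2*m) (fun u : Fin (2*m) => (L false u + L true u) / 2) = (2*(m:ℝ)+1)/2 := by
      rw [hMfun, gw_const]
      push_cast
      field_simp
    have hb0le : gw (2*m) (L false) ≤ ((m:ℝ)+1)/2 := by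
      calc gw (2*m) (L false) ≤ ∑ u, (((1 : Equiv.Perm (Fin (2*m))) u).val + 1 : ℝ) * L false u :=
            gw_le _ _ 1
        _ = ∑ u : Fin (2*m), ((u.val : ℝ) + 1) * (if u.val < m then (m : ℝ)⁻¹ else 0) := by
            rw [hLf]; simp
        _ = ((m:ℝ)+1)/2 := by rw [sum_b0 m hm]
    have hb1le : gw (2*m) (L true) ≤ ((m:ℝ)+1)/2 := by
      calc gw (2*m) (L true) ≤ ∑ u, (((swapHalf m) u).val + 1 : ℝ) * L true u :=
            gw_le _ _ (swapHalf m)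
        _ = ∑ u : Fin (2*m), (((swapHalf m u).val : ℝ) + 1) * (if u.val < m then 0 else (m : ℝ)⁻¹) := by
            rw [hLt]
        _ = ((m:ℝ)+1)/2 := by rw [sum_b1 m hm]
    have hb0ge : (1:ℝ) ≤ gw (2*m) (L false) := one_le_gw _ _ (hLnn false) (hLsum false)
    have hb1ge : (1:ℝ) ≤ gw (2*m) (L true) := one_le_gw _ _ (hLnn true) (hLsum true)
    set b0 := gw (2*m) (L false)
    set b1 := gw (2*m) (L true)
    rw [hA]
    have hmR : (1:ℝ) ≤ (m:ℝ) := by exact_mod_cast hm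
    have hD : 0 < p * ((2*(m:ℝ)+1)/2) + (1-p)/2 * (b0 + b1) := by nlinarith
    rw [div_le_div_iff₀ (by nlinarith) hD]
    nlinarith [mul_nonneg (by linarith : (0:ℝ) ≤ 1 - p)
      (by linarith : 0 ≤ ((m:ℝ)+1) - (b0 + b1)), hp0, hmR]
  have hbdd : BddAbove S := ⟨2/(1+p), fun r hr => hub r hr⟩
  have hne : S.Nonempty := by
    obtain ⟨r, hrS, -⟩ := hmem 1 one_pos
    exact ⟨r, hrS⟩
  apply le_antisymm
  · exact csSup_le hne hub
  · have hsup : ∀ m : ℕ, 0 < m → (2*(m:ℝ)+1)/((1+p)*m+1) ≤ sSup S := by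
      intro m hm
      obtain ⟨r, hrS, hrge⟩ := hmem m hm
      exact hrge.trans (le_csSup hbdd hrS)
    have h0 : Filter.Tendsto (fun m : ℕ => ((m:ℝ))⁻¹) Filter.atTop (nhds 0) :=
      tendsto_inv_atTop_nhds_zero_nat
    have hmain : Filter.Tendsto (fun m : ℕ => (2 + (m:ℝ)⁻¹)/((1+p) + (m:ℝ)⁻¹))
        Filter.atTop (nhds ((2+0)/((1+p)+0))) :=
      Filter.Tendsto.div (tendsto_const_nhds.add h0) (tendsto_const_nhds.add h0)
        (by simpa using h1p.ne')
    have heq : (fun m : ℕ => (2 + (m:ℝ)⁻¹)/((1+p) + (m:ℝ)⁻¹)) =ᶠ[Filter.atTop]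
        (fun m : ℕ => (2*(m:ℝ)+1)/((1+p)*m+1)) := by
      refine Filter.eventually_atTop.mpr ⟨1, fun m hm => ?_⟩
      have hm0 : (m:ℝ) ≠ 0 := Nat.cast_ne_zero.mpr (by omega)
      have hmR : (1:ℝ) ≤ (m:ℝ) := by exact_mod_cast hm
      rw [div_eq_div_iff (by positivity) (by nlinarith)]
      field_simp
    have htend : Filter.Tendsto (fun m : ℕ => (2*(m:ℝ)+1)/((1+p)*m+1))
        Filter.atTop (nhds (2/(1+p))) := by
      have h' := hmain.congr' heq
      rw [add_zero, add_zero] at h'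
      exact h'
    exact le_of_tendsto htend (Filter.eventually_atTop.mpr ⟨1, fun m hm => hsup m (by omega)⟩)
end

section
/- Let P_{XY} be a joint probability mass function on a finite set 𝒳 × 𝒴, let ρ > 0, let y ∈ 𝒴 satisfy P_Y(y) > 0, and assume P_{X|Y}(x|y) > 0 for every x ∈ 𝒳 with P_X(x) > 0. Then the pointwise oblivious maximal ρ-guesswork leakage, i.e. the supremum over all finite sets 𝒰 and channels P_{U|X} of the ratio [inf over pmfs P̂ on 𝒰 of W_ρ(P_U, P̂)] / [inf over pmfs P̂ on 𝒰 of W_ρ(P_{U|Y}(·|y), P̂)], equals max_{x : P_X(x) > 0} P_X(x) / P_{X|Y}(x|y), i.e. exp(D_∞(P_X ‖ P_{X|Y=y})); in particular it does not depend on ρ. -/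
open Finset
open scoped ENNReal

/-- `P` is a probability mass function on the finite set `U`. -/
def IsPMF {U : Type*} [Fintype U] (P : U → ℝ) : Prop :=
  (∀ u, 0 ≤ P u) ∧ ∑ u, P u = 1

/-- The generalized binomial coefficient `C(k+ρ-1, ρ) = Γ(k+ρ)/(Γ(ρ+1)Γ(k))`. -/
noncomputable def genBinom (ρ : ℝ) (k : ℕ) : ℝ :=
  Real.Gamma ((k : ℝ) + ρ) / (Real.Gamma (ρ + 1) * Real.Gamma (k : ℝ))

/-- The expected value `W_ρ(P, P̂)` of `V_ρ = C(G+ρ-1, ρ)` in oblivious guessing of a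
random variable with pmf `P` using i.i.d. guesses drawn from `P̂`:
`W_ρ(P, P̂) = ∑_{u : P̂(u)>0} P(u) ∑_{k=1}^∞ C(k+ρ-1,ρ) P̂(u) (1-P̂(u))^{k-1}`,
with `W_ρ(P, P̂) = ∞` if `P(u) > 0` and `P̂(u) = 0` for some `u`. -/
noncomputable def Wrho {U : Type*} [Fintype U] (ρ : ℝ) (P Phat : U → ℝ) : ℝ≥0∞ :=
  if ∃ u, 0 < P u ∧ Phat u = 0 then ⊤
  else ∑ u ∈ univ.filter (fun u => 0 < Phat u),
    ENNReal.ofReal (P u) *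
      ∑' k : ℕ, ENNReal.ofReal (genBinom ρ (k + 1) * (Phat u * (1 - Phat u) ^ k))


section Series

variable {ρ : ℝ} (hρ : 0 < ρ)

include hρ in
lemma genBinom_succ_pos (k : ℕ) : 0 < genBinom ρ (k + 1) := by
  have h1 : (0:ℝ) < ((k:ℝ) + 1) + ρ := by positivity
  have h2 : (0:ℝ) < ρ + 1 := by linarith
  have h3 : (0:ℝ) < (k:ℝ) + 1 := by positivity
  unfold genBinom
  push_cast
  exact div_pos (Real.Gamma_pos_of_pos h1)
    (mul_pos (Real.Gamma_pos_of_pos h2) (Real.Gamma_pos_of_pos h3))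

include hρ in
lemma genBinom_one : genBinom ρ 1 = 1 := by
  have h2 : (0:ℝ) < ρ + 1 := by linarith
  unfold genBinom
  rw [Nat.cast_one, Real.Gamma_one, add_comm (1:ℝ) ρ, mul_one,
    div_self (ne_of_gt (Real.Gamma_pos_of_pos h2))]

include hρ in
lemma genBinom_succ_succ (k : ℕ) :
    genBinom ρ (k + 2) = genBinom ρ (k + 1) * (((k:ℝ) + 1 + ρ) / ((k:ℝ) + 1)) := by
  have h1 : ((k:ℝ) + 1) + ρ ≠ 0 := by positivity
  have h3 : ((k:ℝ) + 1) ≠ 0 := by positivity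
  have e1 : ((k:ℝ) + 2) + ρ = (((k:ℝ) + 1) + ρ) + 1 := by ring
  have e2 : ((k:ℝ) + 2) = ((k:ℝ) + 1) + 1 := by ring
  unfold genBinom
  push_cast
  rw [e1, e2, Real.Gamma_add_one h1, Real.Gamma_add_one h3]
  have hg1 : Real.Gamma (ρ + 1) ≠ 0 := ne_of_gt (Real.Gamma_pos_of_pos (by linarith))
  have hg2 : Real.Gamma ((k:ℝ) + 1) ≠ 0 :=
    ne_of_gt (Real.Gamma_pos_of_pos (by positivity))
  field_simp

include hρ in
lemma one_le_genBinom_succ (k : ℕ) : 1 ≤ genBinom ρ (k + 1) := by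
  induction k with
  | zero => rw [genBinom_one hρ]
  | succ n ih =>
      rw [genBinom_succ_succ hρ]
      have h3 : (0:ℝ) < (n:ℝ) + 1 := by positivity
      have : (1:ℝ) ≤ ((n:ℝ) + 1 + ρ) / ((n:ℝ) + 1) := by
        rw [le_div_iff₀ h3]; linarith
      nlinarith [genBinom_succ_pos hρ n]

include hρ in
lemma summable_master (d : ℕ) {b : ℝ} (hb0 : 0 < b) (hb1 : b < 1) :
    Summable (fun k : ℕ => ((k:ℝ) + 1) ^ d * genBinom ρ (k + 1) * b ^ k) := by
  apply summable_of_ratio_test_tendsto_lt_one hb1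
  · filter_upwards with k
    have := genBinom_succ_pos hρ k
    positivity
  · have hfun : ∀ k : ℕ,
        ‖(((k + 1 : ℕ):ℝ) + 1) ^ d * genBinom ρ (k + 1 + 1) * b ^ (k + 1)‖ /
          ‖((k:ℝ) + 1) ^ d * genBinom ρ (k + 1) * b ^ k‖ =
        (((k:ℝ) + 2) / ((k:ℝ) + 1)) ^ d * (((k:ℝ) + 1 + ρ) / ((k:ℝ) + 1)) * b := by
      intro k
      push_cast
      have hg := genBinom_succ_pos hρ k
      have hg2 := genBinom_succ_pos hρ (k + 1)
      push_cast at hg2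
      have hk1 : (0:ℝ) < (k:ℝ) + 1 := by positivity
      have hrec := genBinom_succ_succ hρ k
      rw [Real.norm_eq_abs, Real.norm_eq_abs, abs_of_pos (by positivity),
        abs_of_pos (by positivity)]
      rw [show k + 1 + 1 = k + 2 from rfl, hrec]
      rw [pow_succ b k]
      have h2 : (0:ℝ) < (k:ℝ) + 1 + ρ := by positivity
      rw [div_pow, ← div_div]
      field_simp
      ring
    have key : Filter.Tendsto
        (fun k : ℕ => (((k:ℝ) + 2) / ((k:ℝ) + 1)) ^ d * (((k:ℝ) + 1 + ρ) / ((k:ℝ) + 1)) * b)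
        Filter.atTop (nhds (1 ^ d * 1 * b)) := by
      apply Filter.Tendsto.mul_const
      apply Filter.Tendsto.mul
      · apply Filter.Tendsto.pow
        have h : Filter.Tendsto (fun k : ℕ => 1 + 1 / ((k:ℝ) + 1)) Filter.atTop
            (nhds (1 + 0)) := by
          apply Filter.Tendsto.const_add
          exact tendsto_one_div_add_atTop_nhds_zero_nat
        rw [add_zero] at h
        apply h.congr
        intro k
        have hk1 : ((k:ℝ) + 1) ≠ 0 := by positivity
        field_simp
        ring
      · have h : Filter.Tendsto (fun k : ℕ => 1 + ρ * (1 / ((k:ℝ) + 1))) Filter.atTop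
            (nhds (1 + ρ * 0)) := by
          apply Filter.Tendsto.const_add
          exact Filter.Tendsto.const_mul _ tendsto_one_div_add_atTop_nhds_zero_nat
        rw [mul_zero, add_zero] at h
        apply h.congr
        intro k
        have hk1 : ((k:ℝ) + 1) ≠ 0 := by positivity
        field_simp
    simp only [one_pow, one_mul] at key
    exact Filter.Tendsto.congr (fun k => (hfun k).symm) key

include hρ in
lemma summable_F {x : ℝ} (hx : |x| < 1) :
    Summable (fun k : ℕ => genBinom ρ (k + 1) * x ^ k) := by
  set b := (|x| + 1) / 2 with hb
  have hb0 : 0 < b := by positivity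
  have hb1 : b < 1 := by rw [hb]; linarith
  have hxb : |x| < b := by rw [hb]; linarith
  apply Summable.of_norm_bounded (summable_master hρ 0 hb0 hb1)
  intro k
  have hg := genBinom_succ_pos hρ k
  rw [Real.norm_eq_abs, abs_mul, abs_of_pos hg, abs_pow, pow_zero, one_mul]
  exact mul_le_mul_of_nonneg_left (pow_le_pow_left₀ (abs_nonneg x) hxb.le k) hg.le

include hρ in
lemma summable_D' {x : ℝ} (hx : |x| < 1) :
    Summable (fun k : ℕ => genBinom ρ (k + 2) * (((k:ℝ) + 1) * x ^ k)) := by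
  set b := (|x| + 1) / 2 with hb
  have hb0 : 0 < b := by positivity
  have hb1 : b < 1 := by rw [hb]; linarith
  have hxb : |x| < b := by rw [hb]; linarith
  apply Summable.of_norm_bounded
    (((summable_master hρ 1 hb0 hb1).mul_left (1 + ρ)))
  intro k
  have hg := genBinom_succ_pos hρ k
  have hk1 : (0:ℝ) < (k:ℝ) + 1 := by positivity
  have hle : genBinom ρ (k + 2) ≤ (1 + ρ) * genBinom ρ (k + 1) := by
    rw [genBinom_succ_succ hρ k, mul_comm (1 + ρ)]
    apply mul_le_mul_of_nonneg_left _ hg.le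
    rw [div_le_iff₀ hk1]
    nlinarith
  have hg2 := genBinom_succ_pos hρ (k + 1)
  push_cast at hg2
  rw [Real.norm_eq_abs, abs_mul, abs_mul, abs_of_pos (by positivity : (0:ℝ) < genBinom ρ (k+2)),
    abs_of_pos hk1, abs_pow, pow_one]
  calc genBinom ρ (k + 2) * (((k:ℝ) + 1) * |x| ^ k)
      ≤ ((1 + ρ) * genBinom ρ (k + 1)) * (((k:ℝ) + 1) * b ^ k) := by
        apply mul_le_mul hle
        · exact mul_le_mul_of_nonneg_left (pow_le_pow_left₀ (abs_nonneg x) hxb.le k) hk1.le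
        · positivity
        · positivity
    _ = (1 + ρ) * (((k:ℝ) + 1) * genBinom ρ (k + 1) * b ^ k) := by ring

include hρ in
lemma summable_D {x : ℝ} (hx : |x| < 1) :
    Summable (fun k : ℕ => genBinom ρ (k + 1) * ((k:ℝ) * x ^ (k - 1))) := by
  rw [← summable_nat_add_iff 1]
  apply (summable_D' hρ hx).congr
  intro k
  simp only [Nat.add_sub_cancel]
  push_cast
  ring

include hρ in
lemma summable_kxk {x : ℝ} (hx : |x| < 1) :
    Summable (fun k : ℕ => genBinom ρ (k + 1) * ((k:ℝ) * x ^ k)) := by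
  set b := (|x| + 1) / 2 with hb
  have hb0 : 0 < b := by positivity
  have hb1 : b < 1 := by rw [hb]; linarith
  have hxb : |x| < b := by rw [hb]; linarith
  apply Summable.of_norm_bounded (summable_master hρ 1 hb0 hb1)
  intro k
  have hg := genBinom_succ_pos hρ k
  have hk0 : (0:ℝ) ≤ (k:ℝ) := Nat.cast_nonneg k
  rw [Real.norm_eq_abs, abs_mul, abs_mul, abs_of_pos hg, abs_of_nonneg hk0, abs_pow, pow_one]
  calc genBinom ρ (k + 1) * ((k:ℝ) * |x| ^ k)
      ≤ genBinom ρ (k + 1) * (((k:ℝ) + 1) * b ^ k) := by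
        apply mul_le_mul_of_nonneg_left _ hg.le
        apply mul_le_mul (by linarith) (pow_le_pow_left₀ (abs_nonneg x) hxb.le k)
          (by positivity) (by positivity)
    _ = ((k:ℝ) + 1) * genBinom ρ (k + 1) * b ^ k := by ring

include hρ in
lemma deriv_identity {x : ℝ} (hx : |x| < 1) :
    (1 - x) * (∑' k : ℕ, genBinom ρ (k + 1) * ((k:ℝ) * x ^ (k - 1))) =
      (1 + ρ) * (∑' k : ℕ, genBinom ρ (k + 1) * x ^ k) := by
  have hD := summable_D hρ hx
  have hD' := summable_D' hρ hx
  have hkk := summable_kxk hρ hx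
  have hF := summable_F hρ hx
  have step1 : (∑' k : ℕ, genBinom ρ (k + 1) * ((k:ℝ) * x ^ (k - 1))) =
      ∑' k : ℕ, genBinom ρ (k + 2) * (((k:ℝ) + 1) * x ^ k) := by
    rw [hD.tsum_eq_zero_add]
    simp only [Nat.cast_zero, zero_mul, mul_zero, zero_add]
    apply tsum_congr
    intro k
    simp only [Nat.add_sub_cancel]
    push_cast
    ring
  have step2 : x * (∑' k : ℕ, genBinom ρ (k + 1) * ((k:ℝ) * x ^ (k - 1))) =
      ∑' k : ℕ, genBinom ρ (k + 1) * ((k:ℝ) * x ^ k) := by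
    rw [← tsum_mul_left]
    apply tsum_congr
    intro k
    cases k with
    | zero => simp
    | succ n =>
        simp only [Nat.add_sub_cancel]
        push_cast
        ring
  rw [sub_mul, one_mul, step2, step1, ← hD'.tsum_sub hkk, ← tsum_mul_left]
  apply tsum_congr
  intro k
  have hk1 : ((k:ℝ) + 1) ≠ 0 := by positivity
  rw [genBinom_succ_succ hρ k]
  field_simp
  ring

include hρ in
lemma hasDerivAt_F {b : ℝ} (hb0 : 0 < b) (hb1 : b < 1) {x : ℝ} (hx : x ∈ Set.Ioo (-b) b) :
    HasDerivAt (fun z : ℝ => ∑' k : ℕ, genBinom ρ (k + 1) * z ^ k)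
      (∑' k : ℕ, genBinom ρ (k + 1) * ((k:ℝ) * x ^ (k - 1))) x := by
  have hbabs : |b| < 1 := by rwa [abs_of_pos hb0]
  have hu : Summable (fun k : ℕ => genBinom ρ (k + 1) * ((k:ℝ) * b ^ (k - 1))) :=
    summable_D hρ hbabs
  have hg : ∀ (k : ℕ) (z : ℝ), z ∈ Set.Ioo (-b) b →
      HasDerivAt (fun w : ℝ => genBinom ρ (k + 1) * w ^ k)
        (genBinom ρ (k + 1) * ((k:ℝ) * z ^ (k - 1))) z :=
    fun k z _ => (hasDerivAt_pow k z).const_mul (genBinom ρ (k + 1))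
  have hg' : ∀ (k : ℕ) (z : ℝ), z ∈ Set.Ioo (-b) b →
      ‖genBinom ρ (k + 1) * ((k:ℝ) * z ^ (k - 1))‖ ≤
        genBinom ρ (k + 1) * ((k:ℝ) * b ^ (k - 1)) := by
    intro k z hz
    have hgp := genBinom_succ_pos hρ k
    have hzb : |z| ≤ b := by
      rw [abs_le]
      exact ⟨hz.1.le, hz.2.le⟩
    rw [Real.norm_eq_abs, abs_mul, abs_mul, abs_of_pos hgp,
      abs_of_nonneg (Nat.cast_nonneg k), abs_pow]
    apply mul_le_mul_of_nonneg_left _ hgp.le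
    exact mul_le_mul_of_nonneg_left (pow_le_pow_left₀ (abs_nonneg z) hzb (k - 1))
      (Nat.cast_nonneg k)
  have hmem0 : (0:ℝ) ∈ Set.Ioo (-b) b := ⟨by linarith, hb0⟩
  have hg0 : Summable (fun k : ℕ => genBinom ρ (k + 1) * (0:ℝ) ^ k) :=
    summable_F hρ (by simpa using zero_lt_one)
  exact hasDerivAt_tsum_of_isPreconnected hu isOpen_Ioo
    (convex_Ioo (-b) b).isPreconnected hg hg' hmem0 hg0 hx

include hρ in
lemma F_eq {x : ℝ} (hx0 : 0 ≤ x) (hx1 : x < 1) :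
    ∑' k : ℕ, genBinom ρ (k + 1) * x ^ k = (1 - x) ^ (-(1 + ρ)) := by
  set b := (1 + x) / 2 with hb
  have hb0 : 0 < b := by positivity
  have hb1 : b < 1 := by rw [hb]; linarith
  set F : ℝ → ℝ := fun z => ∑' k : ℕ, genBinom ρ (k + 1) * z ^ k with hF
  set h : ℝ → ℝ := fun z => (1 - z) ^ (1 + ρ) * F z with hh
  have hder : ∀ z ∈ Set.Ioo (-b) b, HasDerivAt h 0 z := by
    intro z hz
    have hz1 : z < 1 := lt_of_lt_of_le hz.2 hb1.le
    have h1z : (0:ℝ) < 1 - z := by linarith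
    have hzabs : |z| < 1 := by
      rw [abs_lt]
      constructor
      · have : -b < z := hz.1
        have : -1 < -b := by linarith
        linarith
      · exact hz1
    have hd1 : HasDerivAt (fun w : ℝ => (1 - w) ^ (1 + ρ))
        (-((1 + ρ) * (1 - z) ^ ρ)) z := by
      have hbase : HasDerivAt (fun w : ℝ => 1 - w) (-1) z := by
        simpa using (hasDerivAt_id z).const_sub 1
      have hpow : HasDerivAt (fun w : ℝ => w ^ (1 + ρ))
          ((1 + ρ) * (1 - z) ^ ((1 + ρ) - 1)) (1 - z) :=
        Real.hasDerivAt_rpow_const (Or.inl h1z.ne')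
      have := hpow.comp z hbase
      simpa [Function.comp_def, show (1:ℝ) + ρ - 1 = ρ by ring, mul_comm, mul_assoc] using this
    have hd2 : HasDerivAt F (∑' k : ℕ, genBinom ρ (k + 1) * ((k:ℝ) * z ^ (k - 1))) z :=
      hasDerivAt_F hρ hb0 hb1 hz
    have hmul := hd1.mul hd2
    have hid := deriv_identity hρ hzabs
    have hsplit : (1 - z) ^ (1 + ρ) = (1 - z) ^ ρ * (1 - z) := by
      rw [show (1:ℝ) + ρ = ρ + 1 by ring, Real.rpow_add h1z, Real.rpow_one]
    have hzero : -((1 + ρ) * (1 - z) ^ ρ) * F z +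
        (1 - z) ^ (1 + ρ) * (∑' k : ℕ, genBinom ρ (k + 1) * ((k:ℝ) * z ^ (k - 1))) = 0 := by
      rw [hsplit]
      have hid' : (1 - z) * (∑' k : ℕ, genBinom ρ (k + 1) * ((k:ℝ) * z ^ (k - 1))) =
          (1 + ρ) * F z := hid
      linear_combination ((1 - z) ^ ρ) * hid'
    rw [hzero] at hmul
    exact hmul
  have hmemb : ∀ z ∈ Set.Icc (0:ℝ) x, z ∈ Set.Ioo (-b) b := by
    intro z hz
    constructor
    · have := hz.1; linarith
    · have := hz.2; rw [hb]; linarith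
  have hconst := constant_of_has_deriv_right_zero
    (f := h) (a := 0) (b := x)
    (fun z hz => ((hder z (hmemb z hz)).continuousAt).continuousWithinAt)
    (fun z hz => (hder z (hmemb z ⟨hz.1, hz.2.le⟩)).hasDerivWithinAt)
  have hx_mem : x ∈ Set.Icc (0:ℝ) x := Set.right_mem_Icc.2 hx0
  have hxx := hconst x hx_mem
  have hF0 : F 0 = 1 := by
    have he : F 0 = ∑' k : ℕ, genBinom ρ (k + 1) * (0:ℝ) ^ k := rfl
    rw [he, tsum_eq_single 0 (fun k hk => by
      cases k with
      | zero => exact absurd rfl hk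
      | succ n => simp)]
    simp [genBinom_one hρ]
  have hh0 : h 0 = 1 := by
    have he : h 0 = (1 - (0:ℝ)) ^ (1 + ρ) * F 0 := rfl
    rw [he, hF0]
    simp
  rw [hh0] at hxx
  have h1x : (0:ℝ) < 1 - x := by linarith
  have hA : (0:ℝ) < (1 - x) ^ (1 + ρ) := Real.rpow_pos_of_pos h1x _
  have hFx : F x = ((1 - x) ^ (1 + ρ))⁻¹ := by
    have hhx : (1 - x) ^ (1 + ρ) * F x = 1 := hxx
    exact eq_inv_of_mul_eq_one_left (by rw [mul_comm]; exact hhx)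
  calc ∑' k : ℕ, genBinom ρ (k + 1) * x ^ k = F x := rfl
    _ = ((1 - x) ^ (1 + ρ))⁻¹ := hFx
    _ = (1 - x) ^ (-(1 + ρ)) := (Real.rpow_neg h1x.le _).symm

end Series

noncomputable def powSum {U : Type*} [Fintype U] (ρ : ℝ) (P : U → ℝ) : ℝ :=
  ∑ u, P u ^ ((1 + ρ)⁻¹)

section PartTwo

variable {U : Type*} [Fintype U] {ρ : ℝ} (hρ : 0 < ρ)

include hρ

lemma pmf_le_one {P : U → ℝ} (hP : IsPMF P) (u : U) : P u ≤ 1 := by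
  rw [← hP.2]
  exact Finset.single_le_sum (fun v _ => hP.1 v) (mem_univ u)

lemma inner_tsum_eq {q : ℝ} (hq0 : 0 < q) (hq1 : q ≤ 1) :
    ∑' k : ℕ, ENNReal.ofReal (genBinom ρ (k + 1) * (q * (1 - q) ^ k)) =
      ENNReal.ofReal (q ^ (-ρ)) := by
  have hx0 : (0:ℝ) ≤ 1 - q := by linarith
  have hx1 : (1:ℝ) - q < 1 := by linarith
  have habs : |1 - q| < 1 := by rw [abs_of_nonneg hx0]; linarith
  have hsumm : Summable (fun k : ℕ => genBinom ρ (k + 1) * (q * (1 - q) ^ k)) := by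
    apply ((summable_F hρ habs).mul_left q).congr
    intro k
    ring
  have hnonneg : ∀ k : ℕ, 0 ≤ genBinom ρ (k + 1) * (q * (1 - q) ^ k) := by
    intro k
    have := genBinom_succ_pos hρ k
    positivity
  rw [← ENNReal.ofReal_tsum_of_nonneg hnonneg hsumm]
  congr 1
  have h1 : ∑' k : ℕ, genBinom ρ (k + 1) * (q * (1 - q) ^ k) =
      q * ∑' k : ℕ, genBinom ρ (k + 1) * (1 - q) ^ k := by
    rw [← tsum_mul_left]
    apply tsum_congr
    intro k
    ring
  rw [h1, F_eq hρ hx0 hx1, show (1:ℝ) - (1 - q) = q by ring]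
  nth_rewrite 1 [← Real.rpow_one q]
  rw [← Real.rpow_add hq0]
  norm_num

lemma Wrho_eq {P Phat : U → ℝ} (hP : IsPMF P) (hPhat : IsPMF Phat)
    (hsupp : ¬∃ u, 0 < P u ∧ Phat u = 0) :
    Wrho ρ P Phat =
      ENNReal.ofReal (∑ u ∈ univ.filter (fun u => 0 < Phat u), P u * Phat u ^ (-ρ)) := by
  rw [Wrho, if_neg hsupp, ENNReal.ofReal_sum_of_nonneg
    (fun u _ => mul_nonneg (hP.1 u) (Real.rpow_nonneg (hPhat.1 u) _))]
  apply Finset.sum_congr rfl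
  intro u hu
  have hq0 : 0 < Phat u := (mem_filter.1 hu).2
  have hq1 : Phat u ≤ 1 := pmf_le_one hρ hPhat u
  rw [inner_tsum_eq hρ hq0 hq1, ← ENNReal.ofReal_mul (hP.1 u)]

lemma powSum_sum_filter {P : U → ℝ} (hP0 : ∀ u, 0 ≤ P u) {s : Finset U}
    (hs : ∀ u, u ∉ s → P u = 0) :
    powSum ρ P = ∑ u ∈ s, P u ^ ((1 + ρ)⁻¹) := by
  have hαne : ((1:ℝ) + ρ)⁻¹ ≠ 0 := inv_ne_zero (by linarith)
  rw [powSum]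
  rw [← Finset.sum_subset (Finset.subset_univ s)]
  intro u _ hu
  rw [hs u hu, Real.zero_rpow hαne]

lemma one_le_powSum {P : U → ℝ} (hP : IsPMF P) : 1 ≤ powSum ρ P := by
  have hα1 : ((1:ℝ) + ρ)⁻¹ ≤ 1 := by
    rw [inv_le_one_iff₀]
    right; linarith
  calc (1:ℝ) = ∑ u, P u := hP.2.symm
    _ ≤ ∑ u, P u ^ ((1 + ρ)⁻¹) := by
        apply Finset.sum_le_sum
        intro u _
        rcases (hP.1 u).eq_or_lt with h | h
        · rw [← h, Real.zero_rpow (by positivity)]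
        · calc P u = P u ^ (1:ℝ) := (Real.rpow_one _).symm
            _ ≤ P u ^ ((1 + ρ)⁻¹) :=
              Real.rpow_le_rpow_of_exponent_ge h (pmf_le_one hρ hP u) hα1

lemma Wrho_ge {P Phat : U → ℝ} (hP : IsPMF P) (hPhat : IsPMF Phat) :
    ENNReal.ofReal ((powSum ρ P) ^ (1 + ρ)) ≤ Wrho ρ P Phat := by
  by_cases hsupp : ∃ u, 0 < P u ∧ Phat u = 0
  · rw [Wrho, if_pos hsupp]
    exact le_top
  · rw [Wrho_eq hρ hP hPhat hsupp]
    apply ENNReal.ofReal_le_ofReal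
    set α : ℝ := (1 + ρ)⁻¹ with hα
    have h1ρ : (0:ℝ) < 1 + ρ := by linarith
    have hα0 : 0 < α := by rw [hα]; exact inv_pos.2 (by linarith)
    set s : Finset U := univ.filter (fun u => 0 < Phat u) with hs
    set W : ℝ := ∑ u ∈ s, P u * Phat u ^ (-ρ) with hW
    have hW0 : 0 ≤ W := by
      apply Finset.sum_nonneg
      intro u _
      exact mul_nonneg (hP.1 u) (Real.rpow_nonneg (hPhat.1 u) _)
    push_neg at hsupp
    have hzero : ∀ u, u ∉ s → P u = 0 := by
      intro u hu
      rw [hs, mem_filter] at hu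
      push_neg at hu
      by_contra hne
      have hPu : 0 < P u := lt_of_le_of_ne (hP.1 u) (Ne.symm hne)
      exact (hsupp u hPu) (le_antisymm (hu (mem_univ u)) (hPhat.1 u))
    have hT : powSum ρ P = ∑ u ∈ s, P u ^ α := powSum_sum_filter hρ hP.1 hzero
    have hpq : Real.HolderConjugate (1 + ρ) ((1 + ρ) / ρ) := by
      rw [Real.holderConjugate_iff]
      constructor
      · linarith
      · field_simp
    have hHolder := Real.inner_le_Lp_mul_Lq_of_nonneg s hpq
      (f := fun u => (P u * Phat u ^ (-ρ)) ^ α)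
      (g := fun u => Phat u ^ (ρ * α))
      (fun u _ => Real.rpow_nonneg (mul_nonneg (hP.1 u) (Real.rpow_nonneg (hPhat.1 u) _)) _)
      (fun u _ => Real.rpow_nonneg (hPhat.1 u) _)
    have hρne : ρ ≠ 0 := hρ.ne'
    have h1ρne : (1:ℝ) + ρ ≠ 0 := h1ρ.ne'
    have hfg : ∀ u ∈ s, (P u * Phat u ^ (-ρ)) ^ α * Phat u ^ (ρ * α) = P u ^ α := by
      intro u hu
      have hq0 : 0 < Phat u := (mem_filter.1 hu).2
      rw [Real.mul_rpow (hP.1 u) (Real.rpow_nonneg (hPhat.1 u) _), mul_assoc,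
        ← Real.rpow_mul (hPhat.1 u), ← Real.rpow_add hq0, neg_mul, neg_add_cancel,
        Real.rpow_zero, mul_one]
    have hsum1 : ∑ i ∈ s, ((P i * Phat i ^ (-ρ)) ^ α) ^ (1 + ρ) = W := by
      rw [hW]
      apply Finset.sum_congr rfl
      intro u _
      have hX0 : 0 ≤ P u * Phat u ^ (-ρ) :=
        mul_nonneg (hP.1 u) (Real.rpow_nonneg (hPhat.1 u) _)
      rw [← Real.rpow_mul hX0, hα, inv_mul_cancel₀ h1ρne, Real.rpow_one]
    have hsum2 : ∑ i ∈ s, (Phat i ^ (ρ * α)) ^ ((1 + ρ) / ρ) = ∑ i ∈ s, Phat i := by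
      apply Finset.sum_congr rfl
      intro u _
      rw [← Real.rpow_mul (hPhat.1 u)]
      rw [show ρ * α * ((1 + ρ) / ρ) = 1 by rw [hα]; field_simp, Real.rpow_one]
    have hsum3 : ∑ i ∈ s, Phat i ≤ 1 := by
      rw [← hPhat.2]
      exact Finset.sum_le_sum_of_subset_of_nonneg (Finset.subset_univ s)
        (fun u _ _ => hPhat.1 u)
    have hsum3' : 0 ≤ ∑ i ∈ s, Phat i := Finset.sum_nonneg (fun u _ => hPhat.1 u)
    rw [hsum1, hsum2] at hHolder
    have hkey : powSum ρ P ≤ W ^ ((1:ℝ) / (1 + ρ)) := by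
      calc powSum ρ P = ∑ u ∈ s, (P u * Phat u ^ (-ρ)) ^ α * Phat u ^ (ρ * α) := by
            rw [hT]
            exact (Finset.sum_congr rfl hfg).symm
        _ ≤ W ^ ((1:ℝ) / (1 + ρ)) * (∑ i ∈ s, Phat i) ^ ((1:ℝ) / ((1 + ρ) / ρ)) := hHolder
        _ ≤ W ^ ((1:ℝ) / (1 + ρ)) * 1 := by
            apply mul_le_mul_of_nonneg_left _ (Real.rpow_nonneg hW0 _)
            exact Real.rpow_le_one hsum3' hsum3 (by positivity)
        _ = W ^ ((1:ℝ) / (1 + ρ)) := mul_one _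
    have hps0 : 0 ≤ powSum ρ P := le_trans zero_le_one (one_le_powSum hρ hP)
    calc powSum ρ P ^ (1 + ρ) ≤ (W ^ ((1:ℝ) / (1 + ρ))) ^ (1 + ρ) :=
          Real.rpow_le_rpow hps0 hkey (by linarith)
      _ = W := by
          rw [← Real.rpow_mul hW0, one_div, inv_mul_cancel₀ h1ρne, Real.rpow_one]

lemma isPMF_opt {P : U → ℝ} (hP : IsPMF P) :
    IsPMF (fun u => P u ^ ((1 + ρ)⁻¹) / powSum ρ P) := by
  have hT0 : (0:ℝ) < powSum ρ P := lt_of_lt_of_le zero_lt_one (one_le_powSum hρ hP)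
  constructor
  · intro u
    exact div_nonneg (Real.rpow_nonneg (hP.1 u) _) hT0.le
  · rw [← Finset.sum_div, powSum, div_self (by rw [powSum] at hT0; exact hT0.ne')]

lemma Wrho_opt {P : U → ℝ} (hP : IsPMF P) :
    Wrho ρ P (fun u => P u ^ ((1 + ρ)⁻¹) / powSum ρ P) =
      ENNReal.ofReal ((powSum ρ P) ^ (1 + ρ)) := by
  have hT0 : (0:ℝ) < powSum ρ P := lt_of_lt_of_le zero_lt_one (one_le_powSum hρ hP)
  have h1ρ : (0:ℝ) < 1 + ρ := by linarith
  have h1ρne : (1:ℝ) + ρ ≠ 0 := h1ρ.ne'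
  set α : ℝ := (1 + ρ)⁻¹ with hα
  have hα0 : 0 < α := inv_pos.2 h1ρ
  have hiff : ∀ u, (0 < P u ^ α / powSum ρ P) ↔ 0 < P u := by
    intro u
    constructor
    · intro h
      rcases (hP.1 u).eq_or_lt with he | hl
      · exfalso
        rw [← he, Real.zero_rpow hα0.ne', zero_div] at h
        exact lt_irrefl 0 h
      · exact hl
    · intro h
      exact div_pos (Real.rpow_pos_of_pos h α) hT0
  have hsupp : ¬∃ u, 0 < P u ∧ P u ^ α / powSum ρ P = 0 := by
    rintro ⟨u, hu1, hu2⟩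
    have := (hiff u).2 hu1
    rw [hu2] at this
    exact lt_irrefl 0 this
  rw [Wrho_eq hρ hP (isPMF_opt hρ hP) hsupp]
  congr 1
  have hfilter : univ.filter (fun u => 0 < P u ^ α / powSum ρ P) =
      univ.filter (fun u => 0 < P u) := by
    apply Finset.filter_congr
    intro u _
    exact hiff u
  rw [hfilter]
  have hterm : ∀ u ∈ univ.filter (fun u => 0 < P u),
      P u * (P u ^ α / powSum ρ P) ^ (-ρ) = P u ^ α * powSum ρ P ^ ρ := by
    intro u hu
    have hPu : 0 < P u := (mem_filter.1 hu).2
    rw [Real.div_rpow (Real.rpow_nonneg (hP.1 u) _) hT0.le,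
      ← Real.rpow_mul (hP.1 u), Real.rpow_neg hT0.le, div_eq_mul_inv, inv_inv]
    have hPP : P u * P u ^ (α * -ρ) = P u ^ α := by
      nth_rewrite 1 [← Real.rpow_one (P u)]
      rw [← Real.rpow_add hPu]
      congr 1
      rw [hα]
      field_simp
      ring
    calc P u * (P u ^ (α * -ρ) * powSum ρ P ^ ρ)
        = (P u * P u ^ (α * -ρ)) * powSum ρ P ^ ρ := by ring
      _ = P u ^ α * powSum ρ P ^ ρ := by rw [hPP]
  rw [Finset.sum_congr rfl hterm, ← Finset.sum_mul,
    ← powSum_sum_filter hρ hP.1 (fun u hu => by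
      rw [mem_filter] at hu
      push_neg at hu
      exact le_antisymm (hu (mem_univ u)) (hP.1 u))]
  nth_rewrite 1 [← Real.rpow_one (powSum ρ P)]
  rw [← Real.rpow_add hT0]

lemma iInf_Wrho {P : U → ℝ} (hP : IsPMF P) :
    ⨅ Phat : {Q : U → ℝ // IsPMF Q}, Wrho ρ P Phat.1 =
      ENNReal.ofReal ((powSum ρ P) ^ (1 + ρ)) := by
  apply le_antisymm
  · exact iInf_le_of_le ⟨_, isPMF_opt hρ hP⟩ (le_of_eq (Wrho_opt hρ hP))
  · exact le_iInf fun Phat => Wrho_ge hρ hP Phat.2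

end PartTwo

section Assembly

lemma isPMF_push {X : Type*} [Fintype X] {U : Type*} [Fintype U] {K : X → U → ℝ} {P : X → ℝ}
    (hK0 : ∀ x u, 0 ≤ K x u) (hK1 : ∀ x, ∑ u, K x u = 1)
    (hP0 : ∀ x, 0 ≤ P x) (hPs : ∑ x, P x = 1) :
    IsPMF (fun u => ∑ x, K x u * P x) := by
  constructor
  · exact fun u => Finset.sum_nonneg fun x _ => mul_nonneg (hK0 x u) (hP0 x)
  · rw [Finset.sum_comm]
    calc ∑ x, ∑ u, K x u * P x = ∑ x, (∑ u, K x u) * P x := by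
          apply Finset.sum_congr rfl
          intro x _
          rw [Finset.sum_mul]
      _ = ∑ x, P x := by
          apply Finset.sum_congr rfl
          intro x _
          rw [hK1 x, one_mul]
      _ = 1 := hPs

lemma sum_fin_ite {m : ℕ} (a t : ℝ) :
    ∑ u : Fin (m + 2), (if u = 0 then a else t) = a + ((m:ℝ) + 1) * t := by
  have h : ∀ u : Fin (m + 2), (if u = 0 then a else t) = t + (if u = 0 then a - t else 0) := by
    intro u
    by_cases h : u = 0 <;> simp [h]
  rw [Finset.sum_congr rfl (fun u _ => h u), Finset.sum_add_distrib, Finset.sum_const,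
    Finset.sum_ite_eq' univ (0 : Fin (m + 2)) (fun _ => a - t)]
  simp only [Finset.card_univ, Fintype.card_fin, mem_univ, if_true, nsmul_eq_mul]
  push_cast
  ring

end Assembly

/-- **Pointwise oblivious maximal `ρ`-guesswork leakage.**
For a joint pmf `P_{XY}` on a finite set `𝒳 × 𝒴`, `ρ > 0`, and `y` with
`P_Y(y) > 0` such that `P_{X|Y}(x|y) > 0` whenever `P_X(x) > 0`, the supremum over
all finite sets `𝒰` (wlog `Fin n`) and channels `P_{U|X}` of the ratio
`[inf_{P̂} W_ρ(P_U, P̂)] / [inf_{P̂} W_ρ(P_{U|Y}(·|y), P̂)]` equals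
`max_{x : P_X(x)>0} P_X(x)/P_{X|Y}(x|y) = exp (D_∞(P_X ‖ P_{X|Y=y}))`;
in particular it does not depend on `ρ`. -/
theorem pointwise_oblivious_maximal_rho_guesswork_leakage
    {X Y : Type*} [Fintype X] [Fintype Y]
    (PXY : X → Y → ℝ)
    (hnn : ∀ x y, 0 ≤ PXY x y)
    (hsum : ∑ x, ∑ y, PXY x y = 1)
    (ρ : ℝ) (hρ : 0 < ρ)
    (y : Y)
    (hy : 0 < ∑ x, PXY x y)
    (habs : ∀ x, 0 < ∑ y', PXY x y' → 0 < PXY x y / ∑ x', PXY x' y) :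
    sSup {r : ℝ | ∃ (n : ℕ) (K : X → Fin n → ℝ),
        (∀ x u, 0 ≤ K x u) ∧ (∀ x, ∑ u, K x u = 1) ∧
        r = (⨅ Phat : {Q : Fin n → ℝ // IsPMF Q},
              Wrho ρ (fun u => ∑ x, K x u * (∑ y', PXY x y')) Phat.1).toReal /
            (⨅ Phat : {Q : Fin n → ℝ // IsPMF Q},
              Wrho ρ (fun u => ∑ x, K x u * (PXY x y / ∑ x', PXY x' y))
                Phat.1).toReal} =
      ⨆ x : {x : X // 0 < ∑ y', PXY x y'},
        (∑ y', PXY x.1 y') / (PXY x.1 y / ∑ x', PXY x' y) := by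
  classical
  set PX : X → ℝ := fun x => ∑ y', PXY x y' with hPXdef
  set D : ℝ := ∑ x', PXY x' y with hDdef
  set QX : X → ℝ := fun x => PXY x y / D with hQXdef
  show sSup {r : ℝ | ∃ (n : ℕ) (K : X → Fin n → ℝ),
        (∀ x u, 0 ≤ K x u) ∧ (∀ x, ∑ u, K x u = 1) ∧
        r = (⨅ Phat : {Q : Fin n → ℝ // IsPMF Q},
              Wrho ρ (fun u => ∑ x, K x u * PX x) Phat.1).toReal /
            (⨅ Phat : {Q : Fin n → ℝ // IsPMF Q},
              Wrho ρ (fun u => ∑ x, K x u * QX x) Phat.1).toReal} =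
      ⨆ x : {x : X // 0 < PX x}, PX x.1 / QX x.1
  have h1ρ : (0:ℝ) < 1 + ρ := by linarith
  have h1ρne : (1:ℝ) + ρ ≠ 0 := h1ρ.ne'
  set α : ℝ := (1 + ρ)⁻¹ with hα
  have hα0 : 0 < α := inv_pos.2 h1ρ
  have hα1 : α ≤ 1 := by
    rw [hα, inv_le_one_iff₀]
    right
    linarith
  have hPX0 : ∀ x, 0 ≤ PX x := fun x => Finset.sum_nonneg fun y' _ => hnn x y'
  have hPXsum : ∑ x, PX x = 1 := hsum
  have hD0 : 0 < D := hy
  have hQX0 : ∀ x, 0 ≤ QX x := fun x => div_nonneg (hnn x y) hD0.le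
  have hQXsum : ∑ x, QX x = 1 := by
    rw [hQXdef, ← Finset.sum_div, ← hDdef, div_self hD0.ne']
  have hQpos : ∀ x, 0 < PX x → 0 < QX x := habs
  have hexX : ∃ x, 0 < PX x := by
    by_contra h
    push_neg at h
    have hz : ∑ x, PX x = 0 :=
      Finset.sum_eq_zero fun x _ => le_antisymm (h x) (hPX0 x)
    rw [hPXsum] at hz
    exact one_ne_zero hz
  obtain ⟨x₀, hx₀⟩ := hexX
  obtain ⟨xs, hxsmem, hxsmax⟩ := Finset.exists_max_image
    (univ.filter fun x => 0 < PX x) (fun x => PX x / QX x)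
    ⟨x₀, mem_filter.2 ⟨mem_univ _, hx₀⟩⟩
  have hxs : 0 < PX xs := (mem_filter.1 hxsmem).2
  have hqxs : 0 < QX xs := hQpos xs hxs
  set c : ℝ := PX xs / QX xs with hcdef
  have hc0 : 0 < c := div_pos hxs hqxs
  -- RHS equals c
  haveI : Nonempty {x : X // 0 < PX x} := ⟨⟨xs, hxs⟩⟩
  have hsupRHS : (⨆ x : {x : X // 0 < PX x}, PX x.1 / QX x.1) = c := by
    apply le_antisymm
    · apply ciSup_le
      intro x
      exact hxsmax x.1 (mem_filter.2 ⟨mem_univ _, x.2⟩)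
    · have hbr : BddAbove (Set.range (fun x : {x : X // 0 < PX x} => PX x.1 / QX x.1)) :=
        Set.Finite.bddAbove (Set.finite_range _)
      exact le_ciSup hbr (⟨xs, hxs⟩ : {x : X // 0 < PX x})
  rw [hsupRHS]
  -- value of the ratio for any channel
  have hval : ∀ (n : ℕ) (K : X → Fin n → ℝ), (∀ x u, 0 ≤ K x u) → (∀ x, ∑ u, K x u = 1) →
      ((⨅ Phat : {Q : Fin n → ℝ // IsPMF Q},
          Wrho ρ (fun u => ∑ x, K x u * PX x) Phat.1).toReal /
       (⨅ Phat : {Q : Fin n → ℝ // IsPMF Q},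
          Wrho ρ (fun u => ∑ x, K x u * QX x) Phat.1).toReal)
      = (powSum ρ (fun u => ∑ x, K x u * PX x)) ^ (1 + ρ) /
        (powSum ρ (fun u => ∑ x, K x u * QX x)) ^ (1 + ρ) := by
    intro n K hK0 hK1
    have hPU : IsPMF (fun u => ∑ x, K x u * PX x) := isPMF_push hK0 hK1 hPX0 hPXsum
    have hQU : IsPMF (fun u => ∑ x, K x u * QX x) := isPMF_push hK0 hK1 hQX0 hQXsum
    rw [iInf_Wrho hρ hPU, iInf_Wrho hρ hQU,
      ENNReal.toReal_ofReal (Real.rpow_nonneg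
        (le_trans zero_le_one (one_le_powSum hρ hPU)) _),
      ENNReal.toReal_ofReal (Real.rpow_nonneg
        (le_trans zero_le_one (one_le_powSum hρ hQU)) _)]
  -- the set
  set S : Set ℝ := {r : ℝ | ∃ (n : ℕ) (K : X → Fin n → ℝ),
        (∀ x u, 0 ≤ K x u) ∧ (∀ x, ∑ u, K x u = 1) ∧
        r = (⨅ Phat : {Q : Fin n → ℝ // IsPMF Q},
              Wrho ρ (fun u => ∑ x, K x u * PX x) Phat.1).toReal /
            (⨅ Phat : {Q : Fin n → ℝ // IsPMF Q},
              Wrho ρ (fun u => ∑ x, K x u * QX x) Phat.1).toReal} with hSdef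
  -- upper bound
  have hub : ∀ r ∈ S, r ≤ c := by
    rintro r ⟨n, K, hK0, hK1, rfl⟩
    rw [hval n K hK0 hK1]
    have hPU : IsPMF (fun u => ∑ x, K x u * PX x) := isPMF_push hK0 hK1 hPX0 hPXsum
    have hQU : IsPMF (fun u => ∑ x, K x u * QX x) := isPMF_push hK0 hK1 hQX0 hQXsum
    set TP : ℝ := powSum ρ (fun u => ∑ x, K x u * PX x) with hTP
    set TQ : ℝ := powSum ρ (fun u => ∑ x, K x u * QX x) with hTQ
    have hTQ1 : 1 ≤ TQ := one_le_powSum hρ hQU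
    have hTQpow : (1:ℝ) ≤ TQ ^ (1 + ρ) := Real.one_le_rpow hTQ1 h1ρ.le
    have hle : ∀ x, PX x ≤ c * QX x := by
      intro x
      rcases (hPX0 x).eq_or_lt with he | hl
      · rw [← he]
        exact mul_nonneg hc0.le (hQX0 x)
      · have hqx : 0 < QX x := hQpos x hl
        have := hxsmax x (mem_filter.2 ⟨mem_univ _, hl⟩)
        calc PX x = (PX x / QX x) * QX x := (div_mul_cancel₀ _ hqx.ne').symm
          _ ≤ c * QX x := mul_le_mul_of_nonneg_right this hqx.le
    have hTle : TP ≤ c ^ α * TQ := by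
      rw [hTP, hTQ, powSum, powSum, Finset.mul_sum]
      apply Finset.sum_le_sum
      intro u _
      have hP0u : 0 ≤ ∑ x, K x u * PX x := hPU.1 u
      have hQ0u : 0 ≤ ∑ x, K x u * QX x := hQU.1 u
      have hptle : (∑ x, K x u * PX x) ≤ c * ∑ x, K x u * QX x := by
        rw [Finset.mul_sum]
        apply Finset.sum_le_sum
        intro x _
        calc K x u * PX x ≤ K x u * (c * QX x) :=
              mul_le_mul_of_nonneg_left (hle x) (hK0 x u)
          _ = c * (K x u * QX x) := by ring
      calc (∑ x, K x u * PX x) ^ α ≤ (c * ∑ x, K x u * QX x) ^ α :=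
            Real.rpow_le_rpow hP0u hptle hα0.le
        _ = c ^ α * (∑ x, K x u * QX x) ^ α := Real.mul_rpow hc0.le hQ0u
    have hTP0 : 0 ≤ TP := le_trans zero_le_one (one_le_powSum hρ hPU)
    rw [div_le_iff₀ (by linarith : (0:ℝ) < TQ ^ (1 + ρ))]
    calc TP ^ (1 + ρ) ≤ (c ^ α * TQ) ^ (1 + ρ) :=
          Real.rpow_le_rpow hTP0 hTle h1ρ.le
      _ = (c ^ α) ^ (1 + ρ) * TQ ^ (1 + ρ) :=
          Real.mul_rpow (Real.rpow_nonneg hc0.le _) (by linarith)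
      _ = c * TQ ^ (1 + ρ) := by
          rw [← Real.rpow_mul hc0.le, hα, inv_mul_cancel₀ h1ρne, Real.rpow_one]
  -- nonemptiness
  have hne : S.Nonempty := by
    refine ⟨_, ⟨1, fun _ _ => 1, fun x u => zero_le_one, fun x => by simp, rfl⟩⟩
  have hbdd : BddAbove S := ⟨c, hub⟩
  apply le_antisymm (csSup_le hne hub)
  -- lower bound via explicit channels
  set p : ℝ := PX xs with hpdef
  set q : ℝ := QX xs with hqdef
  have hp1 : p ≤ 1 := by
    rw [hpdef, ← hPXsum]
    exact Finset.single_le_sum (fun x _ => hPX0 x) (mem_univ xs)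
  have hq1 : q ≤ 1 := by
    rw [hqdef, ← hQXsum]
    exact Finset.single_le_sum (fun x _ => hQX0 x) (mem_univ xs)
  -- channel for parameter m
  have hmem : ∀ m : ℕ,
      (((1 - p) ^ α + ((m:ℝ) + 1) * (((m:ℝ) + 1)⁻¹ * p) ^ α) ^ (1 + ρ) /
       ((1 - q) ^ α + ((m:ℝ) + 1) * (((m:ℝ) + 1)⁻¹ * q) ^ α) ^ (1 + ρ)) ∈ S := by
    intro m
    have hM0 : (0:ℝ) < (m:ℝ) + 1 := by positivity
    set Kc : X → Fin (m + 2) → ℝ := fun x u =>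
      if x = xs then (if u = 0 then 0 else ((m:ℝ) + 1)⁻¹)
      else (if u = 0 then 1 else 0) with hKc
    have hK0 : ∀ x u, 0 ≤ Kc x u := by
      intro x u
      rw [hKc]
      by_cases hx : x = xs <;> by_cases hu : u = 0 <;> simp [hx, hu] <;> positivity
    have hK1 : ∀ x, ∑ u, Kc x u = 1 := by
      intro x
      rw [hKc]
      by_cases hx : x = xs
      · simp only [hx, if_true]
        rw [sum_fin_ite 0 ((m:ℝ) + 1)⁻¹]
        field_simp
        ring
      · simp only [hx, if_false]
        rw [sum_fin_ite 1 0]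
        ring
    have hpush : ∀ (P : X → ℝ), (∑ x, P x = 1) → ∀ u : Fin (m + 2),
        (∑ x, Kc x u * P x) = if u = 0 then 1 - P xs else ((m:ℝ) + 1)⁻¹ * P xs := by
      intro P hPs u
      have hterm : ∀ x, Kc x u * P x =
          (if u = 0 then 1 else 0) * P x +
          (if x = xs then ((if u = 0 then (0:ℝ) else ((m:ℝ) + 1)⁻¹) -
            (if u = 0 then 1 else 0)) * P x else 0) := by
        intro x
        rw [hKc]
        by_cases hx : x = xs <;> by_cases hu : u = 0 <;> simp [hx, hu] <;> ring
      rw [Finset.sum_congr rfl fun x _ => hterm x, Finset.sum_add_distrib,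
        ← Finset.mul_sum, hPs,
        Finset.sum_ite_eq' univ xs
          (fun x => ((if u = 0 then (0:ℝ) else ((m:ℝ) + 1)⁻¹) -
            (if u = 0 then 1 else 0)) * P x)]
      simp only [mem_univ, if_true]
      by_cases hu : u = 0 <;> simp [hu] <;> ring
    have hpowP : powSum ρ (fun u => ∑ x, Kc x u * PX x) =
        (1 - p) ^ α + ((m:ℝ) + 1) * (((m:ℝ) + 1)⁻¹ * p) ^ α := by
      rw [powSum]
      have he : ∀ u : Fin (m + 2), (∑ x, Kc x u * PX x) ^ ((1 + ρ)⁻¹) =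
          if u = 0 then (1 - p) ^ α else (((m:ℝ) + 1)⁻¹ * p) ^ α := by
        intro u
        rw [hpush PX hPXsum u]
        by_cases hu : u = 0 <;> simp [hu, hα, hpdef]
      rw [Finset.sum_congr rfl fun u _ => he u, sum_fin_ite]
    have hpowQ : powSum ρ (fun u => ∑ x, Kc x u * QX x) =
        (1 - q) ^ α + ((m:ℝ) + 1) * (((m:ℝ) + 1)⁻¹ * q) ^ α := by
      rw [powSum]
      have he : ∀ u : Fin (m + 2), (∑ x, Kc x u * QX x) ^ ((1 + ρ)⁻¹) =
          if u = 0 then (1 - q) ^ α else (((m:ℝ) + 1)⁻¹ * q) ^ α := by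
        intro u
        rw [hpush QX hQXsum u]
        by_cases hu : u = 0 <;> simp [hu, hα, hqdef]
      rw [Finset.sum_congr rfl fun u _ => he u, sum_fin_ite]
    refine ⟨m + 2, Kc, hK0, hK1, ?_⟩
    rw [hval (m + 2) Kc hK0 hK1, hpowP, hpowQ]
  -- the limit
  have hlim : Filter.Tendsto (fun m : ℕ =>
      (((1 - p) ^ α + ((m:ℝ) + 1) * (((m:ℝ) + 1)⁻¹ * p) ^ α) ^ (1 + ρ) /
       ((1 - q) ^ α + ((m:ℝ) + 1) * (((m:ℝ) + 1)⁻¹ * q) ^ α) ^ (1 + ρ)))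
      Filter.atTop (nhds c) := by
    have hp0 : 0 < p := hxs
    have hq0 : 0 < q := hqxs
    have hαlt : α < 1 := by
      rw [hα]
      rw [inv_lt_one_iff₀]
      right
      linarith
    have hident : ∀ m : ℕ,
        (((1 - p) ^ α + ((m:ℝ) + 1) * (((m:ℝ) + 1)⁻¹ * p) ^ α) ^ (1 + ρ) /
         ((1 - q) ^ α + ((m:ℝ) + 1) * (((m:ℝ) + 1)⁻¹ * q) ^ α) ^ (1 + ρ))
        = ((1 - p) ^ α * ((m:ℝ) + 1) ^ (α - 1) + p ^ α) ^ (1 + ρ) /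
          ((1 - q) ^ α * ((m:ℝ) + 1) ^ (α - 1) + q ^ α) ^ (1 + ρ) := by
      intro m
      set M : ℝ := (m:ℝ) + 1 with hMdef
      have hM0 : (0:ℝ) < M := by rw [hMdef]; positivity
      have hMα : 0 < M ^ α := Real.rpow_pos_of_pos hM0 α
      have hMα1 : 0 < M ^ (α - 1) := Real.rpow_pos_of_pos hM0 _
      have h3 : M * M ^ (α - 1) = M ^ α := by
        nth_rewrite 1 [← Real.rpow_one M]
        rw [← Real.rpow_add hM0]
        ring_nf
      have hkey : ∀ t : ℝ, 0 ≤ t → t ≤ 1 →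
          ((1 - t) ^ α + M * (M⁻¹ * t) ^ α) * M ^ (α - 1)
            = (1 - t) ^ α * M ^ (α - 1) + t ^ α := by
        intro t ht ht1
        have h1 : (M⁻¹ * t) ^ α = (M ^ α)⁻¹ * t ^ α := by
          rw [Real.mul_rpow (inv_nonneg.2 hM0.le) ht, Real.inv_rpow hM0.le]
        rw [h1]
        have h2 : M * ((M ^ α)⁻¹ * t ^ α) * M ^ (α - 1) = t ^ α := by
          rw [show M * ((M ^ α)⁻¹ * t ^ α) * M ^ (α - 1)
              = (M * M ^ (α - 1)) * (M ^ α)⁻¹ * t ^ α by ring, h3,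
            mul_inv_cancel₀ hMα.ne', one_mul]
        calc ((1 - t) ^ α + M * ((M ^ α)⁻¹ * t ^ α)) * M ^ (α - 1)
            = (1 - t) ^ α * M ^ (α - 1) + M * ((M ^ α)⁻¹ * t ^ α) * M ^ (α - 1) := by
              ring
          _ = (1 - t) ^ α * M ^ (α - 1) + t ^ α := by rw [h2]
      have hTP0 : 0 ≤ (1 - p) ^ α + M * (M⁻¹ * p) ^ α := by
        apply add_nonneg (Real.rpow_nonneg (by linarith) α)
        exact mul_nonneg hM0.le (Real.rpow_nonneg (mul_nonneg (inv_nonneg.2 hM0.le) hp0.le) α)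
      have hTQ0 : 0 ≤ (1 - q) ^ α + M * (M⁻¹ * q) ^ α := by
        apply add_nonneg (Real.rpow_nonneg (by linarith) α)
        exact mul_nonneg hM0.le (Real.rpow_nonneg (mul_nonneg (inv_nonneg.2 hM0.le) hq0.le) α)
      have hE0 : (0:ℝ) < (M ^ (α - 1)) ^ (1 + ρ) := Real.rpow_pos_of_pos hMα1 _
      have hN : ((1 - p) ^ α * M ^ (α - 1) + p ^ α) ^ (1 + ρ)
          = ((1 - p) ^ α + M * (M⁻¹ * p) ^ α) ^ (1 + ρ) * (M ^ (α - 1)) ^ (1 + ρ) := by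
        rw [← hkey p hp0.le hp1, Real.mul_rpow hTP0 hMα1.le]
      have hD : ((1 - q) ^ α * M ^ (α - 1) + q ^ α) ^ (1 + ρ)
          = ((1 - q) ^ α + M * (M⁻¹ * q) ^ α) ^ (1 + ρ) * (M ^ (α - 1)) ^ (1 + ρ) := by
        rw [← hkey q hq0.le hq1, Real.mul_rpow hTQ0 hMα1.le]
      rw [hN, hD, mul_div_mul_right _ _ hE0.ne']
    have hg : Filter.Tendsto (fun m : ℕ => ((m:ℝ) + 1) ^ (α - 1)) Filter.atTop (nhds 0) := by
      have h1 : Filter.Tendsto (fun m : ℕ => ((m:ℝ) + 1)) Filter.atTop Filter.atTop :=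
        Filter.tendsto_atTop_add_const_right _ 1 tendsto_natCast_atTop_atTop
      have h2 : Filter.Tendsto (fun x : ℝ => x ^ (-(1 - α))) Filter.atTop (nhds 0) :=
        tendsto_rpow_neg_atTop (by linarith)
      have h3 := h2.comp h1
      simp only [Function.comp_def] at h3
      have he : α - 1 = -(1 - α) := by ring
      rw [he]
      exact h3
    have hppos : 0 < p ^ α := Real.rpow_pos_of_pos hp0 α
    have hqpos : 0 < q ^ α := Real.rpow_pos_of_pos hq0 α
    have hnum : Filter.Tendsto (fun m : ℕ => (1 - p) ^ α * ((m:ℝ) + 1) ^ (α - 1) + p ^ α)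
        Filter.atTop (nhds (p ^ α)) := by
      have h := (hg.const_mul ((1 - p) ^ α)).add_const (p ^ α)
      simpa using h
    have hden : Filter.Tendsto (fun m : ℕ => (1 - q) ^ α * ((m:ℝ) + 1) ^ (α - 1) + q ^ α)
        Filter.atTop (nhds (q ^ α)) := by
      have h := (hg.const_mul ((1 - q) ^ α)).add_const (q ^ α)
      simpa using h
    have hvp : (p ^ α) ^ (1 + ρ) = p := by
      rw [← Real.rpow_mul hp0.le, hα, inv_mul_cancel₀ h1ρne, Real.rpow_one]
    have hvq : (q ^ α) ^ (1 + ρ) = q := by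
      rw [← Real.rpow_mul hq0.le, hα, inv_mul_cancel₀ h1ρne, Real.rpow_one]
    have hnum2 : Filter.Tendsto
        (fun m : ℕ => ((1 - p) ^ α * ((m:ℝ) + 1) ^ (α - 1) + p ^ α) ^ (1 + ρ))
        Filter.atTop (nhds p) := by
      have hc := (Real.continuousAt_rpow_const (p ^ α) (1 + ρ) (Or.inl hppos.ne')).tendsto
      have := hc.comp hnum
      simp only [Function.comp_def] at this
      rwa [hvp] at this
    have hden2 : Filter.Tendsto
        (fun m : ℕ => ((1 - q) ^ α * ((m:ℝ) + 1) ^ (α - 1) + q ^ α) ^ (1 + ρ))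
        Filter.atTop (nhds q) := by
      have hc := (Real.continuousAt_rpow_const (q ^ α) (1 + ρ) (Or.inl hqpos.ne')).tendsto
      have := hc.comp hden
      simp only [Function.comp_def] at this
      rwa [hvq] at this
    have hfinal := hnum2.div hden2 hq0.ne'
    rw [hcdef, hpdef, hqdef] at *
    exact Filter.Tendsto.congr (fun m => (hident m).symm) hfinal
  exact le_of_tendsto hlim (Filter.Eventually.of_forall fun m => le_csSup hbdd (hmem m))
end

section
/- Fix a probability mass function P on a finite set 𝒰 = {u_1, …, u_n} with n even and P(u_1) ≥ P(u_2) ≥ … ≥ P(u_n). Then the infimum, over all pairs of probability mass functions A, B on 𝒰 satisfying A(u) + B(u) = 2P(u) for every u ∈ 𝒰, of (1/2)γ(A) + (1/2)γ(B) is at least ∑_{i=1}^{n/2} i · (P(u_{2i}) + P(u_{2i−1})). -/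
open Finset

lemma le_orderEmb_apply {s n : ℕ} (e : Fin s ↪o Fin n) (i : Fin s) : i.val ≤ (e i).val := by
  induction' hk : i.val with k ih generalizing i
  · exact Nat.zero_le _
  · have hks : k < s := by omega
    have hj : (⟨k, hks⟩ : Fin s) < i := by simp [Fin.lt_def, hk]
    have h1 : e ⟨k, hks⟩ < e i := e.strictMono hj
    have h2 := ih ⟨k, hks⟩ rfl
    simp only [Fin.lt_def] at h1
    omega

lemma sum_subset_le {n : ℕ} (P : Fin n → ℝ) (hAnti : Antitone P) (hnn : ∀ u, 0 ≤ P u)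
    (S : Finset (Fin n)) (s : ℕ) (hS : S.card ≤ s) :
    ∑ u ∈ S, P u ≤ ∑ k ∈ univ.filter (fun k : Fin n => k.val < s), P k := by
  have hcard : S.card ≤ n := by simpa using card_le_card (subset_univ S)
  set e := S.orderEmbOfFin rfl with he
  have h1 : ∑ u ∈ S, P u = ∑ i : Fin S.card, P (e i) := by
    refine (Finset.sum_bij (fun i _ => e i) (fun i _ => S.orderEmbOfFin_mem rfl i)
      (fun i _ j _ hij => e.injective hij) (fun u hu => ?_) (fun i _ => rfl)).symm
    have : u ∈ Set.range e := by rw [he, S.range_orderEmbOfFin rfl]; exact hu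
    obtain ⟨i, hi⟩ := this
    exact ⟨i, mem_univ i, hi⟩
  rw [h1]
  have h2 : ∑ i : Fin S.card, P (e i) ≤
      ∑ i : Fin S.card, P ⟨i.val, lt_of_lt_of_le i.2 hcard⟩ := by
    refine Finset.sum_le_sum fun i _ => hAnti ?_
    simpa [Fin.le_def] using le_orderEmb_apply e i
  refine h2.trans ?_
  have h3 : ∑ i : Fin S.card, P ⟨i.val, lt_of_lt_of_le i.2 hcard⟩ =
      ∑ k ∈ univ.filter (fun k : Fin n => k.val < S.card), P k := by
    refine Finset.sum_bij (fun i _ => (⟨i.val, lt_of_lt_of_le i.2 hcard⟩ : Fin n))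
      (fun i _ => by simp [i.2]) (fun i _ j _ hij => by
        apply Fin.ext; simpa [Fin.ext_iff] using hij)
      (fun k hk => ?_) (fun i _ => rfl)
    simp only [mem_filter, mem_univ, true_and] at hk
    exact ⟨⟨k.val, hk⟩, mem_univ _, by simp⟩
  rw [h3]
  refine Finset.sum_le_sum_of_subset_of_nonneg (fun k hk => ?_) (fun k _ _ => hnn k)
  simp only [mem_filter, mem_univ, true_and] at hk ⊢
  omega

lemma layer_cake {n : ℕ} (f : Fin n → ℕ) (hf : ∀ u, f u < n) (P : Fin n → ℝ) :
    ∑ u, ((f u : ℝ) + 1) * P u =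
      ∑ u, P u + ∑ t ∈ range n, ∑ u ∈ univ.filter (fun u => t < f u), P u := by
  have key : ∑ t ∈ range n, ∑ u ∈ univ.filter (fun u => t < f u), P u
      = ∑ u, (f u : ℝ) * P u := by
    have h1 : ∀ t, ∑ u ∈ univ.filter (fun u => t < f u), P u
        = ∑ u : Fin n, if t < f u then P u else 0 := fun t => by
      rw [Finset.sum_filter]
    simp only [h1]
    rw [Finset.sum_comm]
    refine Finset.sum_congr rfl fun u _ => ?_
    rw [← Finset.sum_filter]
    have : (range n).filter (fun t => t < f u) = range (f u) := by
      ext t; simp only [mem_filter, mem_range]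
      exact ⟨fun h => h.2, fun h => ⟨h.trans (hf u), h⟩⟩
    rw [this, Finset.sum_const, card_range, nsmul_eq_mul]
  rw [key]
  rw [← Finset.sum_add_distrib]
  refine Finset.sum_congr rfl fun u _ => by ring

lemma core_ineq {n : ℕ} (P : Fin n → ℝ) (hAnti : Antitone P) (hnn : ∀ u, 0 ≤ P u)
    (f : Fin n → ℕ) (hf : ∀ u, f u < n)
    (hcard : ∀ t, (univ.filter (fun u => f u ≤ t)).card ≤ 2 * (t + 1)) :
    ∑ k : Fin n, ((k.val / 2 + 1 : ℕ) : ℝ) * P k ≤ ∑ u, ((f u : ℝ) + 1) * P u := by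
  rcases Nat.eq_zero_or_pos n with h0 | h0
  · subst h0; simp
  have hg : ∀ k : Fin n, k.val / 2 < n := fun k => lt_of_le_of_lt (Nat.div_le_self _ _) k.2
  have lhs_eq : ∑ k : Fin n, ((k.val / 2 + 1 : ℕ) : ℝ) * P k
      = ∑ k, (((k.val / 2 : ℕ) : ℝ) + 1) * P k := by
    refine Finset.sum_congr rfl fun k _ => by push_cast; ring
  rw [lhs_eq, layer_cake (fun k => k.val / 2) hg P, layer_cake f hf P]
  refine add_le_add le_rfl (Finset.sum_le_sum fun t _ => ?_)
  -- reduce to the complement inequality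
  have hA := Finset.sum_filter_add_sum_filter_not univ (fun k : Fin n => (k : Fin n).val / 2 ≤ t) P
  have hB := Finset.sum_filter_add_sum_filter_not univ (fun u : Fin n => f u ≤ t) P
  have hnotA : univ.filter (fun k : Fin n => ¬ k.val / 2 ≤ t)
      = univ.filter (fun k : Fin n => t < k.val / 2) := by
    refine Finset.filter_congr fun k _ => by omega
  have hnotB : univ.filter (fun u : Fin n => ¬ f u ≤ t)
      = univ.filter (fun u : Fin n => t < f u) := by
    refine Finset.filter_congr fun k _ => by omega
  rw [hnotA] at hA
  rw [hnotB] at hB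
  have key : ∑ u ∈ univ.filter (fun u => f u ≤ t), P u
      ≤ ∑ k ∈ univ.filter (fun k : Fin n => k.val / 2 ≤ t), P k := by
    have hfilt : univ.filter (fun k : Fin n => k.val / 2 ≤ t)
        = univ.filter (fun k : Fin n => k.val < 2 * (t + 1)) := by
      refine Finset.filter_congr fun k _ => by omega
    rw [hfilt]
    exact sum_subset_le P hAnti hnn _ _ (hcard t)
  linarith


/-- **Claim 1 (lower bound).**
Fix a pmf `P` on `𝒰 = {u_1,…,u_n}` (realized as `Fin n`, so that `u_j` is the
index `j-1`), with `n` even and `P(u_1) ≥ P(u_2) ≥ … ≥ P(u_n)`.  Then the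
infimum, over all pairs of pmfs `A, B` with `A(u) + B(u) = 2P(u)` for every `u`,
of `(1/2)γ(A) + (1/2)γ(B)` is at least
`∑_{i=1}^{n/2} i (P(u_{2i}) + P(u_{2i-1}))`, which, written with 0-based indices,
is `∑_{k=0}^{n-1} (⌊k/2⌋ + 1) P(u_{k+1})`. -/
theorem infimum_avg_guesswork_lower_bound
    {n : ℕ} (hn : Even n) (hpos : 0 < n)
    (P : Fin n → ℝ)
    (hAnti : Antitone P)
    (hnn : ∀ u, 0 ≤ P u)
    (hsum : ∑ u, P u = 1) :
    sInf {r : ℝ | ∃ A B : Fin n → ℝ,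
        ((∀ u, 0 ≤ A u) ∧ ∑ u, A u = 1) ∧
        ((∀ u, 0 ≤ B u) ∧ ∑ u, B u = 1) ∧
        (∀ u, A u + B u = 2 * P u) ∧
        r = (1 / 2) * guesswork A + (1 / 2) * guesswork B} ≥
      ∑ k : Fin n, ((k.val / 2 + 1 : ℕ) : ℝ) * P k := by
  refine le_csInf ⟨(1/2) * guesswork P + (1/2) * guesswork P,
    P, P, ⟨hnn, hsum⟩, ⟨hnn, hsum⟩, fun u => by ring, rfl⟩ ?_
  rintro r ⟨A, B, ⟨hA0, hA1⟩, ⟨hB0, hB1⟩, hAB, rfl⟩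
  have hne : Nonempty (Fin n ≃ Fin (Fintype.card (Fin n))) := ⟨Fintype.equivFin _⟩
  obtain ⟨GA, hGA⟩ := Finite.exists_min
    (fun G : Fin n ≃ Fin (Fintype.card (Fin n)) => ∑ u, ((G u).val + 1 : ℝ) * A u)
  obtain ⟨GB, hGB⟩ := Finite.exists_min
    (fun G : Fin n ≃ Fin (Fintype.card (Fin n)) => ∑ u, ((G u).val + 1 : ℝ) * B u)
  have hgA : guesswork A = ∑ u, ((GA u).val + 1 : ℝ) * A u :=
    le_antisymm (ciInf_le (Finite.bddBelow_range _) GA) (le_ciInf hGA)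
  have hgB : guesswork B = ∑ u, ((GB u).val + 1 : ℝ) * B u :=
    le_antisymm (ciInf_le (Finite.bddBelow_range _) GB) (le_ciInf hGB)
  set m : Fin n → ℕ := fun u => min (GA u).val (GB u).val with hm
  have hf : ∀ u, m u < n := fun u => by
    have := (GA u).isLt; simp only [Fintype.card_fin] at this
    exact lt_of_le_of_lt (min_le_left _ _) this
  have hcard : ∀ t, (univ.filter (fun u => m u ≤ t)).card ≤ 2 * (t + 1) := by
    intro t
    have hsub : univ.filter (fun u => m u ≤ t) ⊆
        univ.filter (fun u => (GA u).val ≤ t) ∪ univ.filter (fun u => (GB u).val ≤ t) := by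
      intro u hu
      simp only [mem_filter, mem_union, mem_univ, true_and, hm] at hu ⊢
      omega
    have h1 : ∀ (G : Fin n ≃ Fin (Fintype.card (Fin n))),
        (univ.filter (fun u => (G u).val ≤ t)).card ≤ t + 1 := by
      intro G
      have := Finset.card_le_card_of_injOn (fun u => (G u).val)
        (s := univ.filter (fun u => (G u).val ≤ t)) (t := Finset.range (t + 1))
        (fun u hu => by simp at hu; simp; omega)
        (fun a _ b _ h => G.injective (Fin.ext h))
      simpa using this
    calc (univ.filter (fun u => m u ≤ t)).card ≤ _ := Finset.card_le_card hsub
      _ ≤ _ := Finset.card_union_le _ _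
      _ ≤ 2 * (t + 1) := by have := h1 GA; have := h1 GB; omega
  have hpoint : ∀ u, ((m u : ℝ) + 1) * (2 * P u) ≤
      ((GA u).val + 1 : ℝ) * A u + ((GB u).val + 1 : ℝ) * B u := by
    intro u
    have h1 : ((m u : ℝ) + 1) ≤ ((GA u).val + 1 : ℝ) := by
      have : m u ≤ (GA u).val := min_le_left _ _
      push_cast; exact_mod_cast by simpa using add_le_add_right (Nat.cast_le.mpr this : (m u:ℝ) ≤ _) 1
    have h2 : ((m u : ℝ) + 1) ≤ ((GB u).val + 1 : ℝ) := by
      have : m u ≤ (GB u).val := min_le_right _ _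
      exact by simpa using add_le_add_right (Nat.cast_le.mpr this : (m u:ℝ) ≤ _) 1
    have := hAB u
    nlinarith [hA0 u, hB0 u, mul_le_mul_of_nonneg_right h1 (hA0 u),
      mul_le_mul_of_nonneg_right h2 (hB0 u)]
  have hsum2 : ∑ u, ((m u : ℝ) + 1) * (2 * P u) ≤
      (∑ u, ((GA u).val + 1 : ℝ) * A u) + ∑ u, ((GB u).val + 1 : ℝ) * B u := by
    rw [← Finset.sum_add_distrib]
    exact Finset.sum_le_sum fun u _ => hpoint u
  have hcore := core_ineq P hAnti hnn m hf hcard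
  have hexp : ∑ u, ((m u : ℝ) + 1) * (2 * P u) = 2 * ∑ u, ((m u : ℝ) + 1) * P u := by
    rw [Finset.mul_sum]; exact Finset.sum_congr rfl fun u _ => by ring
  rw [hgA, hgB]
  rw [hexp] at hsum2
  linarith
end

section
/- Fix a probability mass function P on a finite set 𝒰 = {u_1, …, u_n} with n even and P(u_1) ≥ P(u_2) ≥ … ≥ P(u_n). Then the infimum, over all pairs of nonnegative functions Ã, B̃ : 𝒰 → [0, ∞) satisfying Ã(u) + B̃(u) = 2P(u) for every u ∈ 𝒰, of (1/2)γ̄(Ã) + (1/2)γ̄(B̃) equals ∑_{i=1}^{n/2} i · (P(u_{2i}) + P(u_{2i−1})), and it is attained by Ã*(u_{2i−1}) = 2P(u_{2i−1}), Ã*(u_{2i}) = 0, B̃*(u_{2i−1}) = 0, B̃*(u_{2i}) = 2P(u_{2i}) for i ∈ {1, …, n/2}. -/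
open Finset

noncomputable def extGuesswork {U : Type*} [Fintype U] (A : U → ℝ) : ℝ :=
  ⨅ G : U ≃ Fin (Fintype.card U), ∑ u, ((G u).val + 1 : ℝ) * A u

/-!
The value `(1/2) γ̄(Ã) + (1/2) γ̄(B̃)` of a feasible pair is at least
`∑ u, (min (G_A u) (G_B u) + 1) P(u)`, where `G_A, G_B` are optimal guessing orders of `Ã, B̃`.
Every rank occurs at most twice as such a minimum, so at most `2t` points get a weight `≤ t`;
by the rearrangement inequality the cheapest such weighting of the non-increasing `P` is
`k ↦ ⌊k/2⌋ + 1`. The pair supported on the even and on the odd indices attains this value.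
-/

theorem card_filter_lt_le_of_injective {α : Type*} [Fintype α] {f : α → ℕ}
    (hf : Function.Injective f) (t : ℕ) : #{u | f u < t} ≤ t := by
  simpa using card_le_card_of_injOn f (t := range t) (fun u hu => by simpa using hu) hf.injOn

theorem card_filter_min_lt_le {α : Type*} [Fintype α] {f g : α → ℕ}
    (hf : Function.Injective f) (hg : Function.Injective g) (t : ℕ) :
    #{u | min (f u) (g u) < t} ≤ 2 * t := by
  classical
  calc #{u | min (f u) (g u) < t}
        = #(({u | f u < t} : Finset α) ∪ ({u | g u < t} : Finset α)) := by
        simp only [min_lt_iff, filter_or]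
    _ ≤ #{u | f u < t} + #{u | g u < t} := card_union_le _ _
    _ ≤ 2 * t := by
        linarith [card_filter_lt_le_of_injective hf t, card_filter_lt_le_of_injective hg t]

theorem div_add_one_le_comp_sort {n c : ℕ} (hc : 0 < c) {w : Fin n → ℕ}
    (hw : ∀ t, #{u | w u ≤ t} ≤ c * t) (k : Fin n) :
    k / c + 1 ≤ w (Tuple.sort w k) := by
  have hk : k.val + 1 ≤ c * w (Tuple.sort w k) :=
    calc k.val + 1 = #(Iic k) := (Fin.card_Iic k).symm
      _ ≤ #{u | w u ≤ w (Tuple.sort w k)} :=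
          card_le_card_of_injOn (Tuple.sort w)
            (fun j hj => by simpa using Tuple.monotone_sort w (mem_Iic.mp hj))
            (Tuple.sort w).injective.injOn
      _ ≤ _ := hw _
  rw [Nat.add_one_le_iff, Nat.div_lt_iff_lt_mul hc]
  linarith

theorem sum_div_add_one_mul_le_sum_mul {n c : ℕ} (hc : 0 < c) {P : Fin n → ℝ}
    (hP : Antitone P) (hP0 : ∀ k, 0 ≤ P k) {w : Fin n → ℕ}
    (hw : ∀ t, #{u | w u ≤ t} ≤ c * t) :
    ∑ k : Fin n, ((k / c + 1 : ℕ) : ℝ) * P k ≤ ∑ u, (w u : ℝ) * P u := by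
  set σ := Tuple.sort w
  have hanti : Antivary (fun k => (w (σ k) : ℝ)) P :=
    (Nat.mono_cast.comp (Tuple.monotone_sort w)).antivary hP
  calc ∑ k : Fin n, ((k / c + 1 : ℕ) : ℝ) * P k ≤ ∑ k, (w (σ k) : ℝ) * P k := by
        gcongr with k
        · exact hP0 k
        · exact div_add_one_le_comp_sort hc hw k
    _ ≤ ∑ k, (w (σ (σ⁻¹ k)) : ℝ) * P k := hanti.sum_smul_le_sum_comp_perm_smul (σ := σ⁻¹)
    _ = ∑ u, (w u : ℝ) * P u := by simp

section Guesswork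

variable {U : Type*} [Fintype U]

theorem extGuesswork_le (A : U → ℝ) (G : U ≃ Fin (Fintype.card U)) :
    extGuesswork A ≤ ∑ u, ((G u).val + 1 : ℝ) * A u :=
  ciInf_le (Set.finite_range _).bddBelow G

theorem exists_sum_eq_extGuesswork (A : U → ℝ) :
    ∃ G : U ≃ Fin (Fintype.card U), ∑ u, ((G u).val + 1 : ℝ) * A u = extGuesswork A := by
  have : Nonempty (U ≃ Fin (Fintype.card U)) := ⟨Fintype.equivFin U⟩
  exact exists_eq_ciInf_of_finite

theorem exists_two_mul_sum_min_mul_le {A B P : U → ℝ} (hA : ∀ u, 0 ≤ A u) (hB : ∀ u, 0 ≤ B u)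
    (hAB : ∀ u, A u + B u = 2 * P u) :
    ∃ GA GB : U ≃ Fin (Fintype.card U),
      2 * ∑ u, ((min (GA u).val (GB u).val + 1 : ℕ) : ℝ) * P u ≤
        extGuesswork A + extGuesswork B := by
  obtain ⟨GA, hGA⟩ := exists_sum_eq_extGuesswork A
  obtain ⟨GB, hGB⟩ := exists_sum_eq_extGuesswork B
  refine ⟨GA, GB, ?_⟩
  rw [← hGA, ← hGB, mul_sum, ← sum_add_distrib]
  gcongr with u
  set m : ℝ := ((min (GA u).val (GB u).val + 1 : ℕ) : ℝ)
  have hmA : m ≤ (GA u).val + 1 := by simp [m]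
  have hmB : m ≤ (GB u).val + 1 := by simp [m]
  calc 2 * (m * P u) = m * A u + m * B u := by rw [← mul_add, hAB u]; ring
    _ ≤ ((GA u).val + 1) * A u + ((GB u).val + 1) * B u :=
        add_le_add (mul_le_mul_of_nonneg_right hmA (hA u)) (mul_le_mul_of_nonneg_right hmB (hB u))

end Guesswork

theorem two_mul_sum_div_two_add_one_mul_le {n : ℕ} {P A B : Fin n → ℝ} (hP : Antitone P)
    (hA : ∀ u, 0 ≤ A u) (hB : ∀ u, 0 ≤ B u) (hAB : ∀ u, A u + B u = 2 * P u) :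
    2 * ∑ k : Fin n, ((k / 2 + 1 : ℕ) : ℝ) * P k ≤ extGuesswork A + extGuesswork B := by
  obtain ⟨GA, GB, h⟩ := exists_two_mul_sum_min_mul_le hA hB hAB
  have hP0 : ∀ u, 0 ≤ P u := fun u => by linarith [hA u, hB u, hAB u]
  refine le_trans (mul_le_mul_of_nonneg_left ?_ zero_le_two) h
  refine sum_div_add_one_mul_le_sum_mul two_pos hP hP0 fun t => ?_
  simpa only [Nat.add_one_le_iff] using
    card_filter_min_lt_le (f := fun u => (GA u).val) (g := fun u => (GB u).val)
      (Fin.val_injective.comp GA.injective) (Fin.val_injective.comp GB.injective) t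

/-- Listing the other parity class backwards makes this injective whether `n` is even or odd. -/
def parityFirst (n p : ℕ) (k : Fin n) : Fin n :=
  ⟨if k.val % 2 = p then k / 2 else n - 1 - k / 2, by have := k.isLt; split <;> omega⟩

theorem parityFirst_injective {n p : ℕ} (hp : p < 2) : Function.Injective (parityFirst n p) := by
  intro a b hab
  have := a.isLt
  have := b.isLt
  have h := congrArg Fin.val hab
  simp only [parityFirst] at h
  ext
  split at h <;> split at h <;> omega

theorem extGuesswork_ite_mod_two_le {n p : ℕ} (hp : p < 2) (P : Fin n → ℝ) :
    extGuesswork (fun k : Fin n => if k.val % 2 = p then 2 * P k else 0) ≤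
      2 * ∑ k : Fin n with k.val % 2 = p, ((k / 2 + 1 : ℕ) : ℝ) * P k := by
  let G : Fin n ≃ Fin (Fintype.card (Fin n)) :=
    (Equiv.ofBijective _ (Finite.injective_iff_bijective.mp (parityFirst_injective hp))).trans
      (finCongr (Fintype.card_fin n).symm)
  refine (extGuesswork_le _ G).trans_eq ?_
  rw [sum_filter, mul_sum]
  refine sum_congr rfl fun k _ => ?_
  split_ifs with h
  · simp [G, parityFirst, h]
    ring
  · simp

theorem relaxed_splitting_infimum_general
    {n : ℕ}
    (P : Fin n → ℝ)
    (hAnti : Antitone P)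
    (hnn : ∀ u, 0 ≤ P u) :
    (sInf {r : ℝ | ∃ A B : Fin n → ℝ,
        (∀ u, 0 ≤ A u) ∧ (∀ u, 0 ≤ B u) ∧
        (∀ u, A u + B u = 2 * P u) ∧
        r = (1 / 2) * extGuesswork A + (1 / 2) * extGuesswork B} =
      ∑ k : Fin n, ((k.val / 2 + 1 : ℕ) : ℝ) * P k)
    ∧ ((1 / 2) * extGuesswork (fun k : Fin n => if k.val % 2 = 0 then 2 * P k else 0)
        + (1 / 2) * extGuesswork (fun k : Fin n => if k.val % 2 = 1 then 2 * P k else 0)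
      = ∑ k : Fin n, ((k.val / 2 + 1 : ℕ) : ℝ) * P k) := by
  set S := {r : ℝ | ∃ A B : Fin n → ℝ,
    (∀ u, 0 ≤ A u) ∧ (∀ u, 0 ≤ B u) ∧
    (∀ u, A u + B u = 2 * P u) ∧
    r = (1 / 2) * extGuesswork A + (1 / 2) * extGuesswork B}
  set target := ∑ k : Fin n, ((k.val / 2 + 1 : ℕ) : ℝ) * P k
  have hLB : target ∈ lowerBounds S := by
    rintro r ⟨A, B, hA, hB, hAB, rfl⟩
    linarith [two_mul_sum_div_two_add_one_mul_le hAnti hA hB hAB]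
  set value := (1 / 2) * extGuesswork (fun k : Fin n => if k.val % 2 = 0 then 2 * P k else 0)
    + (1 / 2) * extGuesswork (fun k : Fin n => if k.val % 2 = 1 then 2 * P k else 0) with hvalue
  have hUB : value ≤ target := by
    have hsplit : ∑ k : Fin n with k.val % 2 = 0, ((k / 2 + 1 : ℕ) : ℝ) * P k +
        ∑ k : Fin n with k.val % 2 = 1, ((k / 2 + 1 : ℕ) : ℝ) * P k = target := by
      simp_rw [← Nat.mod_two_ne_zero]
      exact sum_filter_add_sum_filter_not _ _ _
    linarith [extGuesswork_ite_mod_two_le zero_lt_two P,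
      extGuesswork_ite_mod_two_le one_lt_two P]
  have hmem : value ∈ S := by
    refine ⟨_, _, fun u => ?_, fun u => ?_, fun u => ?_, rfl⟩ <;>
      rcases Nat.mod_two_eq_zero_or_one u.val with h | h <;> simp [h, hnn u]
  have hopt : value = target := le_antisymm hUB (hLB hmem)
  exact ⟨IsLeast.csInf_eq ⟨hopt ▸ hmem, hLB⟩, hopt⟩

/-- **Relaxed splitting problem, solved exactly.**
Fix a pmf `P` on `𝒰 = {u_1,…,u_n}` (realized as `Fin n`, so that `u_j` is the
index `j-1`), with `n` even and `P(u_1) ≥ … ≥ P(u_n)`.  The infimum, over all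
pairs of nonnegative functions `Ã, B̃` with `Ã(u) + B̃(u) = 2P(u)` for all `u`,
of `(1/2)γ̄(Ã) + (1/2)γ̄(B̃)` equals
`∑_{i=1}^{n/2} i (P(u_{2i}) + P(u_{2i-1}))` — in 0-based indices
`∑_{k=0}^{n-1} (⌊k/2⌋ + 1) P(u_{k+1})` — and it is attained by
`Ã*(u_{2i-1}) = 2P(u_{2i-1})`, `Ã*(u_{2i}) = 0`, `B̃*(u_{2i-1}) = 0`,
`B̃*(u_{2i}) = 2P(u_{2i})` (in 0-based indices: `Ã*` lives on even indices and
`B̃*` on odd indices). -/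
theorem relaxed_splitting_infimum
    {n : ℕ} (hn : Even n) (hpos : 0 < n)
    (P : Fin n → ℝ)
    (hAnti : Antitone P)
    (hnn : ∀ u, 0 ≤ P u)
    (hsum : ∑ u, P u = 1) :
    (sInf {r : ℝ | ∃ A B : Fin n → ℝ,
        (∀ u, 0 ≤ A u) ∧ (∀ u, 0 ≤ B u) ∧
        (∀ u, A u + B u = 2 * P u) ∧
        r = (1 / 2) * extGuesswork A + (1 / 2) * extGuesswork B} =
      ∑ k : Fin n, ((k.val / 2 + 1 : ℕ) : ℝ) * P k)
    ∧ ((1 / 2) * extGuesswork (fun k : Fin n => if k.val % 2 = 0 then 2 * P k else 0)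
        + (1 / 2) * extGuesswork (fun k : Fin n => if k.val % 2 = 1 then 2 * P k else 0)
      = ∑ k : Fin n, ((k.val / 2 + 1 : ℕ) : ℝ) * P k) :=
  relaxed_splitting_infimum_general P hAnti hnn
end

section
/- Fix a probability mass function P on a finite set 𝒰. Then the infimum, over all pairs of nonnegative functions Ã, B̃ : 𝒰 → [0, ∞) with disjoint supports satisfying Ã(u) + B̃(u) = 2P(u) for every u ∈ 𝒰, of (1/2)γ̄(Ã) + (1/2)γ̄(B̃) equals the infimum of the same quantity restricted further to pairs whose support sizes differ by at most one, i.e. |supp(Ã)| − |supp(B̃)| ∈ {0, 1}. -/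
/-!
If `|supp Ã| ≥ |supp B̃| + 2`, move the value `Ã(u₀)` at the last support point `u₀` of an
optimal guessing order of `Ã` over to `B̃`. Since `u₀` sits at position at least `|supp Ã|`,
removing it lowers `γ̄(Ã)` by at least `|supp Ã| · Ã(u₀)`; placing it at a position among the first
`|supp B̃| + 1` that `B̃` leaves empty raises `γ̄(B̃)` by at most `(|supp B̃| + 1) · Ã(u₀)`. The cost
does not increase, and repeating the move balances the supports.
-/

open Finset

section Guesswork

variable {U : Type*} [Fintype U]

noncomputable def guessCost (G : U ≃ Fin (Fintype.card U)) (A : U → ℝ) : ℝ :=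
  ∑ u, ((G u).val + 1 : ℝ) * A u

lemma extGuesswork_le_guessCost (A : U → ℝ) (G : U ≃ Fin (Fintype.card U)) :
    extGuesswork A ≤ guessCost G A :=
  ciInf_le (Set.finite_range _).bddBelow G

lemma exists_guessCost_eq_extGuesswork (A : U → ℝ) :
    ∃ G : U ≃ Fin (Fintype.card U), guessCost G A = extGuesswork A :=
  have : Nonempty (U ≃ Fin (Fintype.card U)) := ⟨Fintype.equivFin U⟩
  exists_eq_ciInf_of_finite

lemma guessCost_update [DecidableEq U] (G : U ≃ Fin (Fintype.card U)) (A : U → ℝ) (u₀ : U)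
    (x : ℝ) :
    guessCost G (Function.update A u₀ x) = guessCost G A + ((G u₀).val + 1) * (x - A u₀) := by
  have hrest : ∑ u ∈ {u₀}ᶜ, ((G u).val + 1 : ℝ) * Function.update A u₀ x u
      = ∑ u ∈ {u₀}ᶜ, ((G u).val + 1 : ℝ) * A u :=
    sum_congr rfl fun u hu => by rw [Function.update_of_ne (by simpa using hu)]
  rw [guessCost, guessCost, Fintype.sum_eq_add_sum_compl u₀, Fintype.sum_eq_add_sum_compl u₀,
    hrest, Function.update_self]
  ring

lemma guessCost_comp_equiv (G : U ≃ Fin (Fintype.card U)) (A : U → ℝ) (σ : U ≃ U) :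
    guessCost G (A ∘ σ) = guessCost (σ.symm.trans G) A :=
  Fintype.sum_equiv σ _ _ fun u => by simp

lemma extGuesswork_comp_equiv (A : U → ℝ) (σ : U ≃ U) :
    extGuesswork (A ∘ σ) = extGuesswork A := by
  change ⨅ G, guessCost G (A ∘ σ) = ⨅ G, guessCost G A
  simp_rw [guessCost_comp_equiv]
  exact (Equiv.equivCongr σ (Equiv.refl _)).iInf_comp (g := fun G => guessCost G A)

end Guesswork

section Support

variable {U : Type*}

lemma card_le_val_add_one_of_forall_le {n : ℕ} (G : U ≃ Fin n) (s : Finset U) {u₀ : U}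
    (h : ∀ u ∈ s, G u ≤ G u₀) : #s ≤ (G u₀).val + 1 := by
  rw [← Fin.card_Iic]
  exact card_le_card_of_injOn G (fun u hu => mem_Iic.mpr (h u hu)) G.injective.injOn

lemma exists_notMem_val_le_card {n : ℕ} (G : U ≃ Fin n) (s : Finset U) (hs : #s < n) :
    ∃ w ∉ s, (G w).val ≤ #s := by
  obtain ⟨w, hw, hws⟩ := exists_mem_notMem_of_card_lt_card (s := s)
    (t := (Iic (⟨#s, hs⟩ : Fin n)).map G.symm.toEmbedding) (by simp)
  refine ⟨w, hws, ?_⟩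
  obtain ⟨i, hi, rfl⟩ := mem_map.mp hw
  simpa [Fin.le_iff_val_le_val] using mem_Iic.mp hi

variable [Fintype U]

noncomputable def posSupport (A : U → ℝ) : Finset U := univ.filter fun u => 0 < A u

lemma mem_posSupport {A : U → ℝ} {u : U} : u ∈ posSupport A ↔ 0 < A u := by
  simp [posSupport]

lemma card_posSupport_update_zero [DecidableEq U] {A : U → ℝ} {u₀ : U} (h : 0 < A u₀) :
    #(posSupport (Function.update A u₀ 0)) + 1 = #(posSupport A) := by
  have : posSupport (Function.update A u₀ 0) = (posSupport A).erase u₀ := by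
    ext u
    rcases eq_or_ne u u₀ with rfl | hu
    · simp [mem_posSupport]
    · simp [mem_posSupport, hu]
  rw [this, card_erase_add_one (mem_posSupport.mpr h)]

lemma card_posSupport_update_of_pos [DecidableEq U] {B : U → ℝ} {u₀ : U} {v : ℝ}
    (hB : B u₀ = 0) (hv : 0 < v) :
    #(posSupport (Function.update B u₀ v)) = #(posSupport B) + 1 := by
  have : posSupport (Function.update B u₀ v) = insert u₀ (posSupport B) := by
    ext u
    rcases eq_or_ne u u₀ with rfl | hu
    · simp [mem_posSupport, hv]
    · simp [mem_posSupport, hu]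
  rw [this, card_insert_of_notMem (by simp [mem_posSupport, hB])]

end Support

section Transfer

variable {U : Type*} [Fintype U] [DecidableEq U]

lemma exists_extGuesswork_update_zero_add_le {A : U → ℝ} (hne : (posSupport A).Nonempty) :
    ∃ u₀ ∈ posSupport A,
      extGuesswork (Function.update A u₀ 0) + #(posSupport A) * A u₀ ≤ extGuesswork A := by
  obtain ⟨G, hG⟩ := exists_guessCost_eq_extGuesswork A
  obtain ⟨u₀, hu₀, hlast⟩ := (posSupport A).exists_max_image G hne
  refine ⟨u₀, hu₀, ?_⟩
  have hcard : (#(posSupport A) : ℝ) ≤ (G u₀).val + 1 := by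
    exact_mod_cast card_le_val_add_one_of_forall_le G _ hlast
  have hremove := extGuesswork_le_guessCost (Function.update A u₀ 0) G
  rw [guessCost_update, hG] at hremove
  nlinarith [mul_le_mul_of_nonneg_right hcard (mem_posSupport.mp hu₀).le]

lemma extGuesswork_update_le {B : U → ℝ} (hB : ∀ u, 0 ≤ B u) {u₀ : U} (hu₀ : B u₀ = 0)
    {v : ℝ} (hv : 0 ≤ v) (hcard : #(posSupport B) < Fintype.card U) :
    extGuesswork (Function.update B u₀ v) ≤ extGuesswork B + (#(posSupport B) + 1) * v := by
  obtain ⟨G, hG⟩ := exists_guessCost_eq_extGuesswork B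
  obtain ⟨w, hw, hGw⟩ := exists_notMem_val_le_card G _ hcard
  have hBw : B w = 0 := le_antisymm (not_lt.mp (mt mem_posSupport.mpr hw)) (hB w)
  have hswap : Function.update B u₀ v = Function.update B w v ∘ Equiv.swap u₀ w := by
    have hB_swap : B ∘ Equiv.swap u₀ w = B := by
      funext u
      simp only [Function.comp_apply, Equiv.swap_apply_def]
      split_ifs <;> simp_all
    rw [Function.update_comp_equiv, hB_swap, Equiv.symm_swap, Equiv.swap_apply_right]
  calc extGuesswork (Function.update B u₀ v)
      = extGuesswork (Function.update B w v) := by rw [hswap, extGuesswork_comp_equiv]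
    _ ≤ guessCost G (Function.update B w v) := extGuesswork_le_guessCost _ G
    _ = extGuesswork B + ((G w).val + 1) * v := by rw [guessCost_update, hG, hBw, sub_zero]
    _ ≤ extGuesswork B + (#(posSupport B) + 1) * v := by gcongr

end Transfer

section Split

variable {U : Type*}

structure IsSplit (C A B : U → ℝ) : Prop where
  nonneg_left : ∀ u, 0 ≤ A u
  nonneg_right : ∀ u, 0 ≤ B u
  eq_zero_or_eq_zero : ∀ u, A u = 0 ∨ B u = 0
  add_eq : ∀ u, A u + B u = C u

namespace IsSplit

variable {C A B : U → ℝ}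

lemma symm (h : IsSplit C A B) : IsSplit C B A :=
  ⟨h.nonneg_right, h.nonneg_left, fun u => (h.eq_zero_or_eq_zero u).symm,
    fun u => add_comm (B u) (A u) ▸ h.add_eq u⟩

lemma update [DecidableEq U] (h : IsSplit C A B) {u₀ : U} (hB : B u₀ = 0) :
    IsSplit C (Function.update A u₀ 0) (Function.update B u₀ (A u₀)) := by
  constructor <;> intro u <;> rcases eq_or_ne u u₀ with rfl | hu
  all_goals simp_all [h.nonneg_left, h.nonneg_right, h.eq_zero_or_eq_zero, ← h.add_eq]

variable [Fintype U]

lemma card_posSupport_add_card_le (h : IsSplit C A B) :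
    #(posSupport A) + #(posSupport B) ≤ Fintype.card U := by
  classical
  rw [← card_union_of_disjoint]
  · exact card_le_univ _
  · refine disjoint_left.mpr fun u hA hB => ?_
    rcases h.eq_zero_or_eq_zero u with h0 | h0
    · exact (mem_posSupport.mp hA).ne' h0
    · exact (mem_posSupport.mp hB).ne' h0

end IsSplit

variable [Fintype U]

noncomputable def splitCost (A B : U → ℝ) : ℝ :=
  (1 / 2) * extGuesswork A + (1 / 2) * extGuesswork B

lemma splitCost_comm (A B : U → ℝ) : splitCost A B = splitCost B A :=
  add_comm _ _

def IsBalanced (A B : U → ℝ) : Prop :=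
  #(posSupport A) = #(posSupport B) ∨ #(posSupport A) = #(posSupport B) + 1

namespace IsSplit

variable {C A B : U → ℝ}

lemma exists_transfer (h : IsSplit C A B) (hcard : #(posSupport B) + 2 ≤ #(posSupport A)) :
    ∃ A' B', IsSplit C A' B' ∧ #(posSupport A') + 1 = #(posSupport A) ∧
      #(posSupport B') = #(posSupport B) + 1 ∧ splitCost A' B' ≤ splitCost A B := by
  classical
  obtain ⟨u₀, hu₀, hremove⟩ :=
    exists_extGuesswork_update_zero_add_le (card_pos.mp (by omega : 0 < #(posSupport A)))
  have hpos : 0 < A u₀ := mem_posSupport.mp hu₀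
  have hB : B u₀ = 0 := (h.eq_zero_or_eq_zero u₀).resolve_left hpos.ne'
  have hinsert := extGuesswork_update_le h.nonneg_right hB hpos.le
    (by have := h.card_posSupport_add_card_le; omega)
  refine ⟨_, _, h.update hB, card_posSupport_update_zero hpos,
    card_posSupport_update_of_pos hB hpos, ?_⟩
  have hcard' : ((#(posSupport B) : ℝ) + 1) * A u₀ ≤ #(posSupport A) * A u₀ := by
    gcongr
    exact_mod_cast (by omega : #(posSupport B) + 1 ≤ #(posSupport A))
  unfold splitCost
  linarith

lemma exists_balanced_of_card_le {A B : U → ℝ} (h : IsSplit C A B)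
    (hle : #(posSupport B) ≤ #(posSupport A)) :
    ∃ A' B', IsSplit C A' B' ∧ IsBalanced A' B' ∧ splitCost A' B' ≤ splitCost A B := by
  by_cases hbal : #(posSupport A) ≤ #(posSupport B) + 1
  · exact ⟨A, B, h, by unfold IsBalanced; omega, le_rfl⟩
  · obtain ⟨A', B', h', hA', hB', hcost⟩ := h.exists_transfer (by omega)
    obtain ⟨A'', B'', h'', hbal'', hcost'⟩ := h'.exists_balanced_of_card_le (by omega)
    exact ⟨A'', B'', h'', hbal'', hcost'.trans hcost⟩
termination_by #(posSupport A)

lemma exists_balanced (h : IsSplit C A B) :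
    ∃ A' B', IsSplit C A' B' ∧ IsBalanced A' B' ∧ splitCost A' B' ≤ splitCost A B := by
  rcases le_total #(posSupport B) #(posSupport A) with hle | hle
  · exact h.exists_balanced_of_card_le hle
  · obtain ⟨A', B', h', hbal, hcost⟩ := h.symm.exists_balanced_of_card_le hle
    exact ⟨A', B', h', hbal, hcost.trans_eq (splitCost_comm B A)⟩

end IsSplit

end Split

theorem splitting_infimum_attained_on_balanced_supports_general
    {U : Type*} [Fintype U]
    (P : U → ℝ) :
    sInf {r : ℝ | ∃ A B : U → ℝ,
        (∀ u, 0 ≤ A u) ∧ (∀ u, 0 ≤ B u) ∧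
        (∀ u, A u = 0 ∨ B u = 0) ∧
        (∀ u, A u + B u = 2 * P u) ∧
        r = (1 / 2) * extGuesswork A + (1 / 2) * extGuesswork B} =
    sInf {r : ℝ | ∃ A B : U → ℝ,
        (∀ u, 0 ≤ A u) ∧ (∀ u, 0 ≤ B u) ∧
        (∀ u, A u = 0 ∨ B u = 0) ∧
        (∀ u, A u + B u = 2 * P u) ∧
        ((univ.filter (fun u => 0 < A u)).card =
            (univ.filter (fun u => 0 < B u)).card ∨
          (univ.filter (fun u => 0 < A u)).card =
            (univ.filter (fun u => 0 < B u)).card + 1) ∧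
        r = (1 / 2) * extGuesswork A + (1 / 2) * extGuesswork B} := by
  refine csInf_eq_csInf_of_forall_exists_le ?_ ?_
  · rintro r ⟨A, B, hA, hB, hAB, hadd, rfl⟩
    obtain ⟨A', B', h', hbal, hcost⟩ := (IsSplit.mk hA hB hAB hadd).exists_balanced
    exact ⟨_, ⟨A', B', h'.1, h'.2, h'.3, h'.4, hbal, rfl⟩, hcost⟩
  · rintro r ⟨A, B, hA, hB, hAB, hadd, -, rfl⟩
    exact ⟨_, ⟨A, B, hA, hB, hAB, hadd, rfl⟩, le_rfl⟩

/-- **Reduction to nearly balanced supports.**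
Fix a pmf `P` on a finite set `𝒰`.  The infimum, over all pairs of nonnegative
functions `Ã, B̃ : 𝒰 → [0,∞)` with disjoint supports and `Ã(u) + B̃(u) = 2P(u)`
for every `u`, of `(1/2)γ̄(Ã) + (1/2)γ̄(B̃)` equals the infimum of the same
quantity restricted further to pairs whose support sizes satisfy
`|supp(Ã)| − |supp(B̃)| ∈ {0, 1}`. -/
theorem splitting_infimum_attained_on_balanced_supports
    {U : Type*} [Fintype U]
    (P : U → ℝ)
    (hnn : ∀ u, 0 ≤ P u)
    (hsum : ∑ u, P u = 1) :
    sInf {r : ℝ | ∃ A B : U → ℝ,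
        (∀ u, 0 ≤ A u) ∧ (∀ u, 0 ≤ B u) ∧
        (∀ u, A u = 0 ∨ B u = 0) ∧
        (∀ u, A u + B u = 2 * P u) ∧
        r = (1 / 2) * extGuesswork A + (1 / 2) * extGuesswork B} =
    sInf {r : ℝ | ∃ A B : U → ℝ,
        (∀ u, 0 ≤ A u) ∧ (∀ u, 0 ≤ B u) ∧
        (∀ u, A u = 0 ∨ B u = 0) ∧
        (∀ u, A u + B u = 2 * P u) ∧
        ((univ.filter (fun u => 0 < A u)).card =
            (univ.filter (fun u => 0 < B u)).card ∨
          (univ.filter (fun u => 0 < A u)).card =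
            (univ.filter (fun u => 0 < B u)).card + 1) ∧
        r = (1 / 2) * extGuesswork A + (1 / 2) * extGuesswork B} :=
  splitting_infimum_attained_on_balanced_supports_general P
end
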